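/- arXiv:1311.7520 — 5 statements merged into one kernel-verified Lean document; each statement's English description precedes it below -/
import Mathlib

section
/- Let U ⊆ ℂ be a nonempty connected open set, let (f_n) be a sequence of functions holomorphic on U converging locally uniformly on U to a function f, and let (a_n) be a sequence of complex numbers with a_n → a such that for every n the value a_n is omitted by f_n on U (i.e. a_n ∉ f_n(U)). Then either f is constant equal to a on U, or f omits the value a on U (i.e. a ∉ f(U)). -/
open Filter Topology Metric

/-- If a sequence of holomorphic functions on a nonempty connected open set `U ⊆ ℂ`
converges locally uniformly on `U` to `f`, and `f n` omits the value `a n` on `U`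
with `a n → a`, then `f` is either constant equal to `a` on `U` or omits `a` on `U`. -/
theorem stmt_0 (U : Set ℂ) (hne : U.Nonempty) (hconn : IsConnected U) (hopen : IsOpen U)
    (f : ℂ → ℂ) (fn : ℕ → ℂ → ℂ)
    (hol : ∀ n, ∀ z ∈ U, DifferentiableAt ℂ (fn n) z)
    (hconv : TendstoLocallyUniformlyOn fn f atTop U)
    (a : ℂ) (an : ℕ → ℂ) (ha : Tendsto an atTop (𝓝 a))
    (havoid : ∀ n, an n ∉ fn n '' U) :
    (∀ z ∈ U, f z = a) ∨ a ∉ f '' U := by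
  by_cases hc : ∀ z ∈ U, f z = a
  · exact Or.inl hc
  right
  rintro ⟨z₀, hz₀, hfz₀⟩
  push_neg at hc
  obtain ⟨z₁, hz₁, hfz₁⟩ := hc
  -- f is differentiable on U
  have hfnd : ∀ n, DifferentiableOn ℂ (fn n) U := fun n =>
    fun z hz => (hol n z hz).differentiableWithinAt
  have hfd : DifferentiableOn ℂ f U :=
    hconv.differentiableOn (Eventually.of_forall hfnd) hopen
  -- g := f - a is analytic on U, not identically zero
  set g : ℂ → ℂ := fun z => f z - a with hg
  have hga : AnalyticOnNhd ℂ g U := by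
    have : DifferentiableOn ℂ g U := hfd.sub_const a
    exact this.analyticOnNhd hopen
  -- zeros of g are isolated at z₀
  have hz₀g : g z₀ = 0 := by simp [hg, hfz₀]
  have hne0 : ∀ᶠ z in 𝓝[≠] z₀, g z ≠ 0 := by
    rcases (hga z₀ hz₀).eventually_eq_zero_or_eventually_ne_zero with h | h
    · exfalso
      have := hga.eqOn_zero_of_preconnected_of_eventuallyEq_zero hconn.isPreconnected hz₀ h hz₁
      simp [hg, sub_eq_zero] at this
      exact hfz₁ this
    · exact h
  -- find a small closed ball in U on which g ≠ 0 away from z₀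
  have hsnhds : {z | z ∈ ({z₀}ᶜ : Set ℂ) → g z ≠ 0} ∈ 𝓝 z₀ := eventually_nhdsWithin_iff.mp hne0
  obtain ⟨r, hr, hball⟩ := Metric.mem_nhds_iff.mp (inter_mem hsnhds (hopen.mem_nhds hz₀))
  set ρ : ℝ := r / 2 with hρdef
  have hρ : 0 < ρ := by positivity
  have hcb : closedBall z₀ ρ ⊆ ball z₀ r := closedBall_subset_ball (by linarith)
  have hcbU : closedBall z₀ ρ ⊆ U := fun z hz => (hball (hcb hz)).2
  -- g nonvanishing on the sphere
  have hsphere : ∀ z ∈ sphere z₀ ρ, g z ≠ 0 := by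
    intro z hz
    have hzne : z ≠ z₀ := by
      intro h; subst h; rw [mem_sphere, dist_self] at hz; exact hρ.ne hz
    exact (hball (hcb (sphere_subset_closedBall hz))).1 hzne
  -- minimum of ‖g‖ on the sphere
  have hsphcompact : IsCompact (sphere z₀ ρ) := isCompact_sphere z₀ ρ
  have hsphne : (sphere z₀ ρ).Nonempty := (NormedSpace.sphere_nonempty).2 hρ.le
  have hgc : ContinuousOn (fun z => ‖g z‖) (sphere z₀ ρ) := by
    apply ContinuousOn.norm
    exact ((hfd.continuousOn.mono (fun z hz => hcbU (sphere_subset_closedBall hz))).sub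
      continuousOn_const)
  obtain ⟨w, hw, hwmin⟩ := hsphcompact.exists_isMinOn hsphne hgc
  set m : ℝ := ‖g w‖ with hm
  have hmpos : 0 < m := norm_pos_iff.mpr (hsphere w hw)
  -- choose n with good approximation
  have hunif : TendstoUniformlyOn fn f atTop (closedBall z₀ ρ) :=
    (tendstoLocallyUniformlyOn_iff_forall_isCompact hopen).mp hconv _ hcbU
      (isCompact_closedBall z₀ ρ)
  have h1 : ∀ᶠ n in atTop, ∀ x ∈ closedBall z₀ ρ, dist (f x) (fn n x) < m / 4 :=
    (Metric.tendstoUniformlyOn_iff.mp hunif) (m / 4) (by positivity)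
  have h2 : ∀ᶠ n in atTop, dist (an n) a < m / 4 :=
    (Metric.tendsto_nhds.mp ha) (m / 4) (by positivity)
  obtain ⟨n, hn1, hn2⟩ := (h1.and h2).exists
  -- gₙ := fn n - an n, nonvanishing on U
  set gn : ℂ → ℂ := fun z => fn n z - an n with hgn
  have hgnne : ∀ z ∈ U, gn z ≠ 0 := by
    intro z hz h
    exact havoid n ⟨z, hz, sub_eq_zero.mp h⟩
  -- lower bound on the sphere: ‖gₙ‖ ≥ m/2
  have hlow : ∀ z ∈ sphere z₀ ρ, m / 2 ≤ ‖gn z‖ := by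
    intro z hz
    have hmz : m ≤ ‖g z‖ := hwmin hz
    have d1 : ‖f z - fn n z‖ < m / 4 := by
      simpa [dist_eq_norm] using hn1 z (sphere_subset_closedBall hz)
    have d2 : ‖an n - a‖ < m / 4 := by simpa [dist_eq_norm] using hn2
    have : ‖g z‖ ≤ ‖gn z‖ + ‖f z - fn n z‖ + ‖an n - a‖ := by
      have : g z = gn z + (f z - fn n z) + (an n - a) := by simp only [hg, hgn]; ring
      rw [this]
      exact (norm_add_le _ _).trans (by gcongr; exact norm_add_le _ _)
    linarith
  -- maximum principle applied to 1/gₙ on the ball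
  have hdiff : DiffContOnCl ℂ (fun z => (gn z)⁻¹) (ball z₀ ρ) := by
    apply DifferentiableOn.diffContOnCl
    rw [closure_ball z₀ hρ.ne']
    intro z hz
    exact (((hol n z (hcbU hz)).sub_const (an n)).inv (hgnne z (hcbU hz))).differentiableWithinAt
  have hbdd : ∀ z ∈ frontier (ball z₀ ρ), ‖(gn z)⁻¹‖ ≤ (m / 2)⁻¹ := by
    rw [frontier_ball z₀ hρ.ne']
    intro z hz
    rw [norm_inv]
    exact inv_anti₀ (by positivity) (hlow z hz)
  have hmax : ‖(gn z₀)⁻¹‖ ≤ (m / 2)⁻¹ :=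
    Complex.norm_le_of_forall_mem_frontier_norm_le isBounded_ball hdiff hbdd
      (subset_closure (mem_ball_self hρ))
  -- but ‖gₙ z₀‖ < m/2, contradiction
  have hsmall : ‖gn z₀‖ < m / 2 := by
    have d1 : ‖f z₀ - fn n z₀‖ < m / 4 := by
      simpa [dist_eq_norm] using hn1 z₀ (mem_closedBall_self hρ.le)
    have d2 : ‖an n - a‖ < m / 4 := by simpa [dist_eq_norm] using hn2
    have heq : gn z₀ = (fn n z₀ - f z₀) - (an n - a) := by
      simp only [hgn]; rw [hfz₀]; ring
    rw [heq]
    calc ‖(fn n z₀ - f z₀) - (an n - a)‖ ≤ ‖fn n z₀ - f z₀‖ + ‖an n - a‖ := norm_sub_le _ _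
      _ = ‖f z₀ - fn n z₀‖ + ‖an n - a‖ := by rw [norm_sub_rev]
      _ < m / 2 := by linarith
  have hgnz₀ : gn z₀ ≠ 0 := hgnne z₀ hz₀
  have : (m / 2)⁻¹ < ‖(gn z₀)⁻¹‖ := by
    rw [norm_inv]
    exact inv_strictAnti₀ (norm_pos_iff.mpr hgnz₀) hsmall
  linarith
end

section
/- Let a, b ∈ ℂ, let (D_n) be a sequence of open subsets of ℂ and g_n functions holomorphic and injective on D_n. Assume hypothesis (H): for every ε > 0 there exist a' ∈ B(a, ε), b' ∈ B(b, ε) and δ > 0 such that, for all sufficiently large n, B(a', δ) ⊆ D_n, and (g_n) converges uniformly on B(a', δ) to a function that is holomorphic and injective on B(a', δ) and sends a' to b'. If in addition there exists ε₀ > 0 such that B(a, ε₀) ⊆ D_n for all sufficiently large n, then (g_n) converges uniformly on compact subsets of B(a, ε₀) to a function that is holomorphic and injective on B(a, ε₀) and sends a to b. -/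
open Filter Topology Metric

/-- If a holomorphic function on a closed disc is at distance `≥ M` from `v` on the
boundary circle but `< M` at the center, it attains the value `v` in the open disc. -/
lemma attains_aux (φ : ℂ → ℂ) (c v : ℂ) (r M : ℝ) (hr : 0 < r)
    (hφ : ∀ z ∈ closedBall c r, DifferentiableAt ℂ φ z)
    (hb : ∀ z ∈ sphere c r, M ≤ ‖φ z - v‖)
    (hc : ‖φ c - v‖ < M) : ∃ w ∈ ball c r, φ w = v := by
  by_contra hcon
  push_neg at hcon
  have hM : 0 < M := lt_of_le_of_lt (norm_nonneg _) hc
  have hne : ∀ z ∈ closedBall c r, φ z - v ≠ 0 := by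
    intro z hz
    rcases eq_or_lt_of_le (mem_closedBall.mp hz) with h | h
    · intro h0
      have := hb z (mem_sphere.mpr h)
      rw [h0, norm_zero] at this
      linarith
    · exact sub_ne_zero.mpr (hcon z (mem_ball.mpr h))
  set ψ : ℂ → ℂ := fun z => (φ z - v)⁻¹ with hψdef
  have hψd : DiffContOnCl ℂ ψ (ball c r) := by
    constructor
    · intro z hz
      exact (((hφ z (ball_subset_closedBall hz)).sub_const v).inv
        (hne z (ball_subset_closedBall hz))).differentiableWithinAt
    · rw [closure_ball c hr.ne']
      have hcφ : ContinuousOn φ (closedBall c r) :=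
        fun z hz => (hφ z hz).continuousAt.continuousWithinAt
      exact (hcφ.sub continuousOn_const).inv₀ hne
  have hfront : ∀ z ∈ frontier (ball c r), ‖ψ z‖ ≤ M⁻¹ := by
    intro z hz
    rw [frontier_ball c hr.ne'] at hz
    rw [hψdef]
    simp only [norm_inv]
    exact inv_anti₀ hM (hb z hz)
  have hcc : c ∈ closure (ball c r) := subset_closure (mem_ball_self hr)
  have := Complex.norm_le_of_forall_mem_frontier_norm_le isBounded_ball hψd hfront hcc
  rw [hψdef] at this
  simp only [norm_inv] at this
  have hpos : 0 < ‖φ c - v‖ :=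
    norm_pos_iff.mpr (hne c (mem_closedBall_self hr.le))
  have : M ≤ ‖φ c - v‖ := by
    rwa [inv_le_inv₀ hpos hM] at this
  linarith

/-- Vitali-type propagation: a uniformly bounded sequence of holomorphic functions on a disc
which is uniformly Cauchy on a small concentric disc is uniformly Cauchy on any strictly
smaller concentric disc. -/
lemma vitali_prop (φ : ℕ → ℂ → ℂ) (c : ℂ) (M R r ρ : ℝ) (hρ : 0 < ρ) (hρr : ρ ≤ r) (hrR : r < R)
    (hdiff : ∀ n, ∀ z ∈ ball c R, DifferentiableAt ℂ (φ n) z)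
    (hbound : ∀ n, ∀ z ∈ ball c R, ‖φ n z‖ ≤ M)
    (hcauchy : UniformCauchySeqOn φ atTop (ball c ρ)) :
    UniformCauchySeqOn φ atTop (ball c r) := by
  have hr0 : 0 < r := hρ.trans_le hρr
  have hR0 : 0 < R := hr0.trans hrR
  have hM0 : 0 ≤ M := (norm_nonneg _).trans (hbound 0 c (mem_ball_self hR0))
  set ρ₁ := ρ / 2 with hρ₁def
  set R₁ := (r + R) / 2 with hR₁def
  have hρ₁0 : 0 < ρ₁ := by positivity
  have hρ₁ρ : ρ₁ < ρ := by simp [hρ₁def]; linarith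
  have hrR₁ : r < R₁ := by simp [hR₁def]; linarith
  have hR₁R : R₁ < R := by simp [hR₁def]; linarith
  have hρ₁r : ρ₁ < r := hρ₁ρ.trans_le hρr
  rw [Metric.uniformCauchySeqOn_iff] at hcauchy ⊢
  intro η hη
  -- choose q with 2 * M * (r / R₁)^q < η / 2
  have htend : Tendsto (fun q : ℕ => 2 * M * (r / R₁) ^ q) atTop (𝓝 0) := by
    have := (tendsto_pow_atTop_nhds_zero_of_lt_one (by positivity)
      ((div_lt_one (by linarith)).mpr hrR₁)).const_mul (2 * M)
    simpa using this
  obtain ⟨q, hq⟩ := (htend.eventually (gt_mem_nhds (half_pos hη))).exists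
  set A := (r / ρ₁) ^ q with hAdef
  have hA1 : 1 ≤ A := one_le_pow₀ ((le_div_iff₀ hρ₁0).mpr (by linarith))
  have hA0 : 0 < A := by linarith
  set ε' := η / (4 * A) with hε'def
  have hε'0 : 0 < ε' := by positivity
  obtain ⟨N, hN⟩ := hcauchy ε' hε'0
  refine ⟨N, fun m hm n hn z hz => ?_⟩
  -- the difference function
  set d : ℂ → ℂ := fun w => φ m w - φ n w with hddef
  have hdd : ∀ w ∈ ball c R, DifferentiableAt ℂ d w :=
    fun w hw => (hdiff m w hw).sub (hdiff n w hw)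
  have hd2M : ∀ w ∈ ball c R, ‖d w‖ ≤ 2 * M := by
    intro w hw
    calc ‖φ m w - φ n w‖ ≤ ‖φ m w‖ + ‖φ n w‖ := norm_sub_le _ _
    _ ≤ 2 * M := by have := hbound m w hw; have := hbound n w hw; linarith
  have hdε : ∀ w ∈ ball c ρ, ‖d w‖ ≤ ε' := by
    intro w hw
    rw [hddef, ← dist_eq_norm]
    exact (hN m hm n hn w hw).le
  -- main estimate
  have key : ‖d z‖ ≤ ε' * A + 2 * M * (r / R₁) ^ q := by
    have h2M0 : 0 ≤ 2 * M * (r / R₁) ^ q := by positivity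
    by_cases hz1 : dist z c ≤ ρ₁
    · have := hdε z (mem_ball.mpr (lt_of_le_of_lt hz1 hρ₁ρ))
      nlinarith
    · push_neg at hz1
      have hzr : dist z c < r := mem_ball.mp hz
      set U : Set ℂ := ball c R₁ \ closedBall c ρ₁ with hUdef
      set F : ℂ → ℂ := fun w => d w * ((ρ₁ : ℂ) * (w - c)⁻¹) ^ q with hFdef
      have hclos : closure U ⊆ closedBall c R₁ \ ball c ρ₁ := by
        refine closure_minimal ?_ (IsClosed.sdiff isClosed_closedBall isOpen_ball)
        exact fun w hw => ⟨ball_subset_closedBall hw.1,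
          fun hb => hw.2 (ball_subset_closedBall hb)⟩
      have hU'R : closedBall c R₁ \ ball c ρ₁ ⊆ ball c R := fun w hw =>
        mem_ball.mpr (lt_of_le_of_lt (mem_closedBall.mp hw.1) hR₁R)
      have hU'c : ∀ w ∈ closedBall c R₁ \ ball c ρ₁, w - c ≠ 0 := by
        intro w hw
        have : ρ₁ ≤ dist w c := not_lt.mp (fun hlt => hw.2 (mem_ball.mpr hlt))
        rw [sub_ne_zero]
        intro hwc
        rw [hwc, dist_self] at this
        linarith
      have hFd : DiffContOnCl ℂ F U := by
        constructor
        · intro w hw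
          have hw' : w ∈ closedBall c R₁ \ ball c ρ₁ :=
            ⟨ball_subset_closedBall hw.1, fun hib => hw.2 (ball_subset_closedBall hib)⟩
          exact ((hdd w (hU'R hw')).mul
            (((differentiableAt_const _).mul
              ((differentiableAt_id.sub_const c).inv (hU'c w hw'))).pow q)).differentiableWithinAt
        · refine ContinuousOn.mono ?_ hclos
          have hcd : ContinuousOn d (closedBall c R₁ \ ball c ρ₁) :=
            fun w hw => (hdd w (hU'R hw)).continuousAt.continuousWithinAt
          exact hcd.mul (((continuousOn_const.mul
            ((continuousOn_id.sub continuousOn_const).inv₀ (hU'c))).pow q))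
      have hfront : frontier U ⊆ sphere c R₁ ∪ sphere c ρ₁ := by
        rw [hUdef, Set.diff_eq]
        refine (frontier_inter_subset _ _).trans ?_
        rintro w (⟨hw, -⟩ | ⟨-, hw⟩)
        · exact Or.inl ((frontier_ball c (by positivity : R₁ ≠ 0) ▸ hw : w ∈ sphere c R₁))
        · rw [frontier_compl, frontier_closedBall c hρ₁0.ne'] at hw
          exact Or.inr hw
      set C := max ε' (2 * M * (ρ₁ / R₁) ^ q) with hCdef
      have hCb : ∀ w ∈ frontier U, ‖F w‖ ≤ C := by
        intro w hw
        rcases hfront hw with hw' | hw'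
        · have hwc : ‖w - c‖ = R₁ := by rw [← dist_eq_norm]; exact mem_sphere.mp hw'
          have hwB : w ∈ ball c R := mem_ball.mpr (by rw [mem_sphere.mp hw']; exact hR₁R)
          have : ‖F w‖ = ‖d w‖ * (ρ₁ / R₁) ^ q := by
            rw [hFdef]
            simp only [norm_mul, norm_pow, norm_inv, Complex.norm_real, Real.norm_eq_abs,
              abs_of_pos hρ₁0, hwc, div_eq_mul_inv]
          rw [this]
          refine le_max_of_le_right ?_
          have := hd2M w hwB
          have hp0 : (0:ℝ) ≤ (ρ₁ / R₁) ^ q := by positivity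
          nlinarith
        · have hwc : ‖w - c‖ = ρ₁ := by rw [← dist_eq_norm]; exact mem_sphere.mp hw'
          have hwB : w ∈ ball c ρ := mem_ball.mpr (by rw [mem_sphere.mp hw']; exact hρ₁ρ)
          have : ‖F w‖ = ‖d w‖ := by
            rw [hFdef]
            simp only [norm_mul, norm_pow, norm_inv, Complex.norm_real, Real.norm_eq_abs,
              abs_of_pos hρ₁0, hwc]
            rw [mul_inv_cancel₀ hρ₁0.ne', one_pow, mul_one]
          rw [this]
          exact le_max_of_le_left (hdε w hwB)
      have hzU : z ∈ U := ⟨mem_ball.mpr (hzr.trans hrR₁), fun hb => hz1.not_ge (mem_closedBall.mp hb)⟩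
      have hFz : ‖F z‖ ≤ C :=
        Complex.norm_le_of_forall_mem_frontier_norm_le (isBounded_ball.subset Set.diff_subset)
          hFd hCb (subset_closure hzU)
      -- unfold ‖F z‖
      set t := ‖z - c‖ with htdef
      have ht : t = dist z c := by rw [htdef, dist_eq_norm]
      have ht0 : ρ₁ < t := by rw [ht]; exact hz1
      have hFz' : ‖F z‖ = ‖d z‖ * (ρ₁ / t) ^ q := by
        rw [hFdef]
        simp only [norm_mul, norm_pow, norm_inv, Complex.norm_real, Real.norm_eq_abs,
          abs_of_pos hρ₁0, ← htdef, div_eq_mul_inv]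
      have hdz : ‖d z‖ ≤ C * (t / ρ₁) ^ q := by
        have h1 : ‖d z‖ * (ρ₁ / t) ^ q ≤ C := hFz' ▸ hFz
        have h2 : (ρ₁ / t) ^ q * (t / ρ₁) ^ q = 1 := by
          rw [← mul_pow, div_mul_div_comm, mul_comm ρ₁ t, div_self (mul_pos (hρ₁0.trans ht0) hρ₁0).ne', one_pow]
        calc ‖d z‖ = ‖d z‖ * (ρ₁ / t) ^ q * (t / ρ₁) ^ q := by
              rw [mul_assoc, h2, mul_one]
        _ ≤ C * (t / ρ₁) ^ q := by
              refine mul_le_mul_of_nonneg_right h1 (by positivity)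
      have htr : t < r := by rw [ht]; exact hzr
      have hmono : (t / ρ₁) ^ q ≤ A := by
        rw [hAdef]
        have h1 : t / ρ₁ ≤ r / ρ₁ := by gcongr
        exact pow_le_pow_left₀ (by positivity) h1 q
      have hprod : (ρ₁ / R₁) ^ q * A = (r / R₁) ^ q := by
        rw [hAdef, ← mul_pow]
        congr 1
        field_simp
      calc ‖d z‖ ≤ C * (t / ρ₁) ^ q := hdz
      _ ≤ C * A := by
            have hC0 : (0:ℝ) ≤ C := le_trans hε'0.le (le_max_left _ _)
            exact mul_le_mul_of_nonneg_left hmono hC0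
      _ = max (ε' * A) (2 * M * (ρ₁ / R₁) ^ q * A) := by
            rw [hCdef, max_mul_of_nonneg _ _ hA0.le]
      _ = max (ε' * A) (2 * M * (r / R₁) ^ q) := by rw [mul_assoc, hprod]
      _ ≤ ε' * A + 2 * M * (r / R₁) ^ q :=
            max_le (le_add_of_nonneg_right h2M0) (le_add_of_nonneg_left (by positivity))
  rw [dist_eq_norm]
  have hε'A : ε' * A = η / 4 := by
    rw [hε'def]
    field_simp
  calc ‖φ m z - φ n z‖ ≤ ε' * A + 2 * M * (r / R₁) ^ q := key
  _ < η := by rw [hε'A]; linarith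

lemma annulus_preconnected (a a' : ℂ) (ε₀ δ : ℝ) (hδ : 0 < δ)
    (hsubB : ball a' δ ⊆ ball a ε₀) (ha'B : a' ∈ ball a ε₀) :
    IsPreconnected (ball a ε₀ \ closedBall a' (δ/2)) := by
  set U := ball a ε₀ \ closedBall a' (δ/2) with hUdef
  set z₀ : ℂ := a' + ((3*δ/4 : ℝ) : ℂ) with hz₀def
  -- points at distance 3δ/4 in direction e^{iθ} are in U
  have harc : ∀ θ : ℝ, a' + ((3*δ/4 : ℝ) : ℂ) * Complex.exp ((θ : ℂ) * Complex.I) ∈ U := by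
    intro θ
    have hd : dist (a' + ((3*δ/4 : ℝ) : ℂ) * Complex.exp ((θ : ℂ) * Complex.I)) a' = 3*δ/4 := by
      rw [dist_eq_norm, add_sub_cancel_left, norm_mul, Complex.norm_real, Real.norm_eq_abs,
        abs_of_pos (by linarith)]
      have := Complex.norm_exp_ofReal_mul_I θ
      rw [this, mul_one]
    constructor
    · exact hsubB (mem_ball.mpr (by rw [hd]; linarith))
    · intro hmem
      rw [mem_closedBall, hd] at hmem
      linarith
  apply isPreconnected_of_forall z₀
  intro y hy
  set dy := y - a' with hdydef
  set ρy := ‖dy‖ with hρydef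
  have hρy : δ/2 < ρy := by
    have := hy.2
    rw [mem_closedBall, Complex.dist_eq, ← hdydef, ← hρydef] at this
    linarith
  have hρy0 : 0 < ρy := by linarith
  set u := Complex.exp ((dy.arg : ℂ) * Complex.I) with hudef
  have hdyu : dy = (ρy : ℂ) * u := (Complex.norm_mul_exp_arg_mul_I dy).symm
  have habsu : ‖u‖ = 1 := Complex.norm_exp_ofReal_mul_I dy.arg
  set p : ℂ := a' + ((3*δ/4 : ℝ) : ℂ) * u with hpdef
  -- the arc from z₀ to p
  set arcmap : ℝ → ℂ := fun t => a' + ((3*δ/4 : ℝ) : ℂ) * Complex.exp (((t * dy.arg : ℝ) : ℂ) * Complex.I)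
    with harcdef
  set A : Set ℂ := arcmap '' Set.Icc (0:ℝ) 1 with hAdef
  have hAconn : IsPreconnected A := by
    apply isPreconnected_Icc.image
    apply Continuous.continuousOn
    exact continuous_const.add (continuous_const.mul (Complex.continuous_exp.comp
      ((Complex.continuous_ofReal.comp (continuous_id.mul continuous_const)).mul
        continuous_const)))
  have hz₀A : z₀ ∈ A := by
    refine ⟨0, ⟨le_refl 0, zero_le_one⟩, ?_⟩
    rw [harcdef, hz₀def]
    norm_num
  have hpA : p ∈ A := by
    refine ⟨1, ⟨zero_le_one, le_refl 1⟩, ?_⟩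
    rw [harcdef, hpdef, hudef]
    norm_num
  have hAU : A ⊆ U := by
    rintro w ⟨t, -, rfl⟩
    exact harc (t * dy.arg)
  -- the segment from p to y
  set Sg : Set ℂ := segment ℝ p y with hSgdef
  have hSgconn : IsPreconnected Sg := (convex_segment p y).isPreconnected
  have hy' : y = a' + (ρy : ℂ) * u := by rw [← hdyu, hdydef]; ring
  have hSgU : Sg ⊆ U := by
    rintro w ⟨s, t, hs, ht, hst, rfl⟩
    have hstC : (s : ℂ) + (t : ℂ) = 1 := by exact_mod_cast congrArg (fun x : ℝ => (x : ℂ)) hst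
    set L : ℝ := s * (3*δ/4) + t * ρy with hLdef
    have hw : s • p + t • y - a' = ((L : ℝ) : ℂ) * u := by
      rw [hpdef, hy', Complex.real_smul, Complex.real_smul, hLdef]
      push_cast
      linear_combination a' * hstC
    have hL : δ/2 < L := by
      rcases le_or_gt s (1/2) with hcase | hcase
      · have hts : t = 1 - s := by linarith
        nlinarith
      · nlinarith
    have hdw : dist (s • p + t • y) a' = L := by
      rw [dist_eq_norm, hw, norm_mul, Complex.norm_real, Real.norm_eq_abs,
        habsu, mul_one, abs_of_pos (((by positivity : (0:ℝ) < δ/2)).trans hL)]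
    constructor
    · rcases le_or_gt ρy (3*δ/4) with hcase | hcase
      · -- everything within ball a' δ
        apply hsubB
        rw [mem_ball, hdw]
        have h34 : L ≤ 3*δ/4 := by nlinarith
        exact lt_of_le_of_lt h34 (by linarith)
      · -- use convexity of ball a ε₀
        have hpball : p ∈ ball a ε₀ := by
          set lam := (3*δ/4) / ρy with hlamdef
          have hlam0 : 0 ≤ lam := by positivity
          have hlam1 : lam ≤ 1 := by rw [hlamdef, div_le_one hρy0]; linarith
          have hp : p = (1 - lam) • a' + lam • y := by
            rw [hpdef, hy', Complex.real_smul, Complex.real_smul, hlamdef]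
            push_cast
            have hinv : (ρy : ℂ) * ((ρy : ℂ))⁻¹ = 1 :=
              mul_inv_cancel₀ (by exact_mod_cast hρy0.ne')
            linear_combination (-(3/4) * (δ:ℂ) * u) * hinv
          rw [hp]
          exact (convex_ball a ε₀) ha'B hy.1 (by linarith) hlam0 (by ring)
        exact (convex_ball a ε₀).segment_subset hpball hy.1 ⟨s, t, hs, ht, hst, rfl⟩
    · intro hmem
      rw [mem_closedBall, hdw] at hmem
      exact absurd hmem (not_le.mpr hL)
  exact ⟨A ∪ Sg, Set.union_subset hAU hSgU, Or.inl hz₀A, Or.inr (right_mem_segment ℝ p y),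
    IsPreconnected.union p hpA (left_mem_segment ℝ p y) hAconn hSgconn⟩
lemma tuo_union {F : ℕ → ℂ → ℂ} {f : ℂ → ℂ} {s t : Set ℂ}
    (hs : TendstoUniformlyOn F f atTop s) (ht : TendstoUniformlyOn F f atTop t) :
    TendstoUniformlyOn F f atTop (s ∪ t) := by
  intro u hu
  filter_upwards [hs u hu, ht u hu] with n h1 h2 x hx
  exact hx.elim (h1 x) (h2 x)

lemma ev_shift {P : ℕ → Prop} (N₀ : ℕ) (h : ∀ᶠ n in atTop, P (n + N₀)) : ∀ᶠ n in atTop, P n := by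
  rw [eventually_atTop] at *
  obtain ⟨N, hN⟩ := h
  exact ⟨N + N₀, fun n hn => by
    have := hN (n - N₀) (by omega); rwa [Nat.sub_add_cancel (by omega)] at this⟩

set_option maxHeartbeats 2000000 in
/-- Proposition 3 of the paper. Let `g n` be holomorphic and injective on open sets `D n`,
and assume (H): for every `ε > 0` there are `a' ∈ B(a,ε)`, `b' ∈ B(b,ε)` and `δ > 0` such
that eventually `B(a',δ) ⊆ D n` and `g n` converges uniformly on `B(a',δ)` to a holomorphic
injective function sending `a'` to `b'`. If moreover `B(a,ε₀) ⊆ D n` for all large `n`,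
then `g n` converges uniformly on compact subsets of `B(a,ε₀)` to a holomorphic injective
function sending `a` to `b`. -/
theorem stmt_8 (a b : ℂ) (D : ℕ → Set ℂ) (hD : ∀ n, IsOpen (D n)) (g : ℕ → ℂ → ℂ)
    (hol : ∀ n, ∀ z ∈ D n, DifferentiableAt ℂ (g n) z)
    (inj : ∀ n, Set.InjOn (g n) (D n))
    (H : ∀ ε > (0 : ℝ), ∃ a' ∈ ball a ε, ∃ b' ∈ ball b ε, ∃ δ > (0 : ℝ),
      (∀ᶠ n in atTop, ball a' δ ⊆ D n) ∧
      ∃ h : ℂ → ℂ, TendstoUniformlyOn g h atTop (ball a' δ) ∧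
        (∀ z ∈ ball a' δ, DifferentiableAt ℂ h z) ∧
        Set.InjOn h (ball a' δ) ∧ h a' = b')
    (ε₀ : ℝ) (hε₀ : 0 < ε₀)
    (hsub : ∀ᶠ n in atTop, ball a ε₀ ⊆ D n) :
    ∃ f : ℂ → ℂ,
      (∀ K ⊆ ball a ε₀, IsCompact K → TendstoUniformlyOn g f atTop K) ∧
      (∀ z ∈ ball a ε₀, DifferentiableAt ℂ f z) ∧
      Set.InjOn f (ball a ε₀) ∧ f a = b := by
  classical
  obtain ⟨a', ha', b', hb', δ₀, hδ₀, hb0, h, hu0, hh0, hinj0, hha⟩ := H (ε₀/2) (half_pos hε₀)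
  have hd'a : dist a' a < ε₀ / 2 := mem_ball.mp ha'
  set δ := min (δ₀/2) ((ε₀ - dist a' a)/2) with hδdef
  have hd0 : 0 < δ := lt_min (by linarith) (by linarith)
  have hδδ₀ : δ < δ₀ := lt_of_le_of_lt (min_le_left _ _) (by linarith)
  have hsub1 : ball a' δ ⊆ ball a' δ₀ := ball_subset_ball hδδ₀.le
  have hδε : δ ≤ (ε₀ - dist a' a)/2 := min_le_right _ _
  have hsubB : ball a' δ ⊆ ball a ε₀ := by
    intro z hz
    rw [mem_ball] at hz ⊢
    calc dist z a ≤ dist z a' + dist a' a := dist_triangle _ _ _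
    _ < ε₀ := by have := dist_nonneg (x := a') (y := a); linarith
  have ha'B : a' ∈ ball a ε₀ := mem_ball.mpr (by linarith)
  have hu : TendstoUniformlyOn g h atTop (ball a' δ) := hu0.mono hsub1
  have hinjh : Set.InjOn h (ball a' δ) := hinj0.mono hsub1
  have hholh : ∀ z ∈ ball a' δ, DifferentiableAt ℂ h z := fun z hz => hh0 z (hsub1 hz)
  -- the minimum of ‖h · - b'‖ on the sphere of radius δ/2
  have hsne : (sphere a' (δ/2)).Nonempty := NormedSpace.sphere_nonempty.mpr (by positivity)
  have hsphsub : sphere a' (δ/2) ⊆ ball a' δ := fun z hz =>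
    mem_ball.mpr (by rw [mem_sphere.mp hz]; linarith)
  have hcOn : ContinuousOn h (sphere a' (δ/2)) :=
    fun z hz => (hholh z (hsphsub hz)).continuousAt.continuousWithinAt
  obtain ⟨zm, hzm, hzmin⟩ := (isCompact_sphere a' (δ/2)).exists_isMinOn hsne
    (Continuous.comp_continuousOn continuous_norm (hcOn.sub continuousOn_const))
  set m := ‖h zm - b'‖ with hmdef
  have hm0 : 0 < m := by
    have hzma : zm ≠ a' := by
      intro he
      have hd := mem_sphere.mp hzm
      rw [he, dist_self] at hd
      have : (0:ℝ) < δ/2 := by positivity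
      rw [← hd] at this
      exact lt_irrefl _ this
    have hne : h zm ≠ b' := fun he => hzma (hinjh (hsphsub hzm) (mem_ball_self hd0)
      (by rw [he, hha]))
    rw [hmdef]
    exact norm_pos_iff.mpr (sub_ne_zero.mpr hne)
  have hmlb : ∀ z ∈ sphere a' (δ/2), m ≤ ‖h z - b'‖ := fun z hz => hzmin hz
  -- bundle the eventual hypotheses
  have E3 : ∀ᶠ n in atTop, ∀ z ∈ ball a' δ, dist (h z) (g n z) < m/5 :=
    Metric.tendstoUniformlyOn_iff.mp hu (m/5) (by positivity)
  have Eall : ∀ᶠ n in atTop, (ball a' δ ⊆ D n ∧ ball a ε₀ ⊆ D n) ∧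
      ∀ z ∈ ball a' δ, dist (h z) (g n z) < m/5 :=
    ((hb0.mono (fun n hn => hsub1.trans hn)).and hsub).and E3
  obtain ⟨N₀, hN₀⟩ := eventually_atTop.mp Eall
  set g' : ℕ → ℂ → ℂ := fun n z => g (n + N₀) z with hg'def
  have hDn : ∀ n, ball a' δ ⊆ D (n + N₀) ∧ ball a ε₀ ⊆ D (n + N₀) :=
    fun n => (hN₀ (n + N₀) (Nat.le_add_left _ _)).1
  have hclose : ∀ n, ∀ z ∈ ball a' δ, dist (h z) (g' n z) < m/5 :=
    fun n => (hN₀ (n + N₀) (Nat.le_add_left _ _)).2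
  have hg'diff : ∀ n, ∀ z ∈ ball a ε₀, DifferentiableAt ℂ (g' n) z :=
    fun n z hz => hol _ z ((hDn n).2 hz)
  have hu' : TendstoUniformlyOn g' h atTop (ball a' δ) := by
    intro u hπ
    exact (tendsto_add_atTop_nat N₀).eventually (hu u hπ)
  -- Step 1: attainment of all values near b'
  have hattain : ∀ n, ∀ v ∈ ball b' (m/5), ∃ w ∈ ball a' (δ/2), g' n w = v := by
    intro n v hv
    have hvb : ‖b' - v‖ < m/5 := by
      rw [← dist_eq_norm, dist_comm]; exact mem_ball.mp hv
    apply attains_aux (g' n) a' v (δ/2) (3*m/5) (by positivity)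
    · intro z hz
      exact hg'diff n z (hsubB (closedBall_subset_ball (by linarith) hz))
    · intro z hz
      have h1 : m ≤ ‖h z - b'‖ := hmlb z hz
      have h2 : ‖h z - g' n z‖ < m/5 := by
        rw [← dist_eq_norm]; exact hclose n z (hsphsub hz)
      have h4 : ‖h z - b'‖ ≤ ‖h z - g' n z‖ + ‖g' n z - v‖ + ‖v - b'‖ := by
        calc ‖h z - b'‖ = ‖(h z - g' n z) + (g' n z - v) + (v - b')‖ := by ring_nf
        _ ≤ _ := norm_add₃_le
      have h5 : ‖v - b'‖ < m/5 := by rwa [norm_sub_rev] at hvb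
      linarith
    · have h2 : ‖h a' - g' n a'‖ < m/5 := by
        rw [← dist_eq_norm]; exact hclose n a' (mem_ball_self hd0)
      calc ‖g' n a' - v‖ ≤ ‖g' n a' - h a'‖ + ‖h a' - v‖ := norm_sub_le_norm_sub_add_norm_sub _ _ _
      _ = ‖g' n a' - h a'‖ + ‖b' - v‖ := by rw [hha]
      _ < m/5 + m/5 := by rw [norm_sub_rev]; exact add_lt_add h2 hvb
      _ < 3*m/5 := by linarith
  -- Step 2: omitted values away from a'
  set U : Set ℂ := ball a ε₀ \ closedBall a' (δ/2) with hUdef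
  have hUopen : IsOpen U := isOpen_ball.sdiff isClosed_closedBall
  have hUsub : U ⊆ ball a ε₀ := Set.diff_subset
  have homit : ∀ n, ∀ z ∈ U, m/5 ≤ ‖g' n z - b'‖ := by
    intro n z hz
    by_contra hlt
    push_neg at hlt
    obtain ⟨w, hw, hgw⟩ := hattain n (g' n z) (mem_ball.mpr (by rwa [dist_eq_norm]))
    have hwz : w = z := inj (n + N₀) ((hDn n).1 (ball_subset_ball (by linarith) hw))
      ((hDn n).2 (hUsub hz)) hgw
    exact hz.2 (ball_subset_closedBall (hwz ▸ hw))
  have hne' : ∀ n, ∀ z ∈ U, g' n z - b' ≠ 0 := by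
    intro n z hz h0
    have := homit n z hz
    rw [h0, norm_zero] at this
    linarith
  set G : ℕ → ℂ → ℂ := fun n z => (g' n z - b')⁻¹ with hGdef
  have hGdiff : ∀ n, ∀ z ∈ U, DifferentiableAt ℂ (G n) z :=
    fun n z hz => ((hg'diff n z (hUsub hz)).sub_const b').inv (hne' n z hz)
  have hGbd : ∀ n, ∀ z ∈ U, ‖G n z‖ ≤ 5/m := by
    intro n z hz
    rw [hGdef]
    simp only [norm_inv]
    rw [show (5:ℝ)/m = (m/5)⁻¹ by field_simp]
    exact inv_anti₀ (by positivity) (homit n z hz)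
  -- the seed point and ball
  set z₀ : ℂ := a' + ((3*δ/4 : ℝ) : ℂ) with hz₀def
  have hz₀a' : dist z₀ a' = 3*δ/4 := by
    rw [hz₀def, dist_eq_norm, add_sub_cancel_left, Complex.norm_real, Real.norm_eq_abs,
      abs_of_pos (by linarith)]
  have hB₀U : ball z₀ (δ/16) ⊆ U ∩ ball a' δ := by
    intro z hz
    rw [mem_ball] at hz
    have h1 : dist z a' ≤ dist z z₀ + dist z₀ a' := dist_triangle _ _ _
    have h2 : dist z₀ a' ≤ dist z₀ z + dist z a' := dist_triangle _ _ _
    rw [dist_comm z₀ z] at h2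
    have hzb : z ∈ ball a' δ := mem_ball.mpr (by rw [hz₀a'] at h1; linarith)
    refine ⟨⟨hsubB hzb, ?_⟩, hzb⟩
    rw [mem_closedBall, not_le, hz₀a'] at *
    linarith
  have hz₀U : z₀ ∈ U := (hB₀U (mem_ball_self (by positivity))).1
  -- pointwise limits have modulus ≥ m/5 on U ∩ ball a' δ
  have hlimlb : ∀ z ∈ U ∩ ball a' δ, m/5 ≤ ‖h z - b'‖ := by
    intro z hz
    have htd : Tendsto (fun n => ‖g' n z - b'‖) atTop (𝓝 ‖h z - b'‖) :=
      ((hu'.tendsto_at hz.2).sub_const b').norm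
    exact ge_of_tendsto htd (Eventually.of_forall (fun n => homit n z hz.1))
  -- uniform convergence of G to H₀ on the seed ball
  set H₀ : ℂ → ℂ := fun z => (h z - b')⁻¹ with hH₀def
  have hseed : TendstoUniformlyOn G H₀ atTop (ball z₀ (δ/16)) := by
    rw [Metric.tendstoUniformlyOn_iff]
    intro η hη
    have hev : ∀ᶠ n in atTop, ∀ z ∈ ball a' δ, dist (h z) (g' n z) < η * (m/5) * (m/5) := by
      rw [Metric.tendstoUniformlyOn_iff] at hu'
      exact hu' _ (by positivity)
    filter_upwards [hev] with n hn z hz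
    have hzU : z ∈ U := (hB₀U hz).1
    have hzb : z ∈ ball a' δ := (hB₀U hz).2
    have h1 : m/5 ≤ ‖g' n z - b'‖ := homit n z hzU
    have h2 : m/5 ≤ ‖h z - b'‖ := hlimlb z ⟨hzU, hzb⟩
    have h3 : ‖h z - g' n z‖ < η * (m/5) * (m/5) := by
      rw [← dist_eq_norm]; exact hn z hzb
    have hgne : g' n z - b' ≠ 0 := hne' n z hzU
    have hhne : h z - b' ≠ 0 := by
      intro h0; rw [h0, norm_zero] at h2; linarith
    rw [hH₀def, hGdef, dist_eq_norm]
    have hid : (h z - b')⁻¹ - (g' n z - b')⁻¹ =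
        ((g' n z - b') - (h z - b')) * ((h z - b')⁻¹ * (g' n z - b')⁻¹) := by
      field_simp
    rw [hid]
    have : ‖(g' n z - b') - (h z - b')‖ < η * (m/5) * (m/5) := by
      rw [show (g' n z - b') - (h z - b') = -(h z - g' n z) by ring, norm_neg]
      exact h3
    rw [norm_mul, norm_mul, norm_inv, norm_inv]
    have hm5 : (0:ℝ) < m/5 := by positivity
    have hia : ‖h z - b'‖⁻¹ ≤ (m/5)⁻¹ := inv_anti₀ hm5 h2
    have hib : ‖g' n z - b'‖⁻¹ ≤ (m/5)⁻¹ := inv_anti₀ hm5 h1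
    calc ‖(g' n z - b') - (h z - b')‖ * (‖h z - b'‖⁻¹ * ‖g' n z - b'‖⁻¹)
        ≤ ‖(g' n z - b') - (h z - b')‖ * ((m/5)⁻¹ * (m/5)⁻¹) := by
          refine mul_le_mul_of_nonneg_left (mul_le_mul hia hib (by positivity) (by positivity))
            (norm_nonneg _)
    _ < (η * (m/5) * (m/5)) * ((m/5)⁻¹ * (m/5)⁻¹) := by
          refine mul_lt_mul_of_pos_right this (by positivity)
    _ = η := by field_simp
  -- propagation of uniform Cauchyness over U
  set S : Set ℂ := {z | z ∈ U ∧ ∃ r > 0, ball z r ⊆ U ∧ UniformCauchySeqOn G atTop (ball z r)}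
    with hSdef
  have hprop : ∀ z R, 0 < R → ball z R ⊆ U → ∀ z', dist z' z < R/8 → z' ∈ S →
      UniformCauchySeqOn G atTop (ball z (R/8)) := by
    intro z R hR hRU z' hz' hz'S
    obtain ⟨-, r', hr', -, hc'⟩ := hz'S
    have hsmall : ball z' (3*R/4) ⊆ U := by
      intro w hw
      rw [mem_ball] at hw
      refine hRU (mem_ball.mpr ?_)
      calc dist w z ≤ dist w z' + dist z' z := dist_triangle _ _ _
      _ < R := by linarith
    have := vitali_prop G z' (5/m) (3*R/4) (R/4) (min r' (R/8)) (lt_min hr' (by linarith))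
      (le_trans (min_le_right _ _) (by linarith)) (by linarith)
      (fun n w hw => hGdiff n w (hsmall hw))
      (fun n w hw => hGbd n w (hsmall hw))
      (hc'.mono (ball_subset_ball (min_le_left _ _)))
    refine this.mono ?_
    intro w hw
    rw [mem_ball] at hw ⊢
    calc dist w z' ≤ dist w z + dist z z' := dist_triangle _ _ _
    _ < R/4 := by rw [dist_comm z z']; linarith
  have hSopen : IsOpen S := by
    rw [Metric.isOpen_iff]
    rintro z ⟨hzU, r, hr, hrU, hc⟩
    refine ⟨r/2, by positivity, ?_⟩
    intro z2 hz2
    rw [mem_ball] at hz2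
    have hsub2 : ball z2 (r/2) ⊆ ball z r := by
      intro w hw
      rw [mem_ball] at hw ⊢
      calc dist w z ≤ dist w z2 + dist z2 z := dist_triangle _ _ _
      _ < r := by linarith
    exact ⟨hrU (mem_ball.mpr (by rw [mem_ball] at *; linarith)), r/2, by positivity,
      hsub2.trans hrU, hc.mono hsub2⟩
  set T : Set ℂ := U \ S with hTdef
  have hTopen : IsOpen T := by
    rw [Metric.isOpen_iff]
    rintro z ⟨hzU, hzS⟩
    obtain ⟨R, hR, hRU⟩ := Metric.isOpen_iff.mp hUopen z hzU
    refine ⟨R/8, by positivity, ?_⟩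
    intro z2 hz2
    rw [mem_ball] at hz2
    have hz2U : z2 ∈ U := hRU (mem_ball.mpr (by linarith))
    refine ⟨hz2U, fun hz2S => hzS ?_⟩
    have := hprop z R hR hRU z2 hz2 hz2S
    exact ⟨hzU, R/8, by positivity,
      (ball_subset_ball (by linarith)).trans hRU, this⟩
  have hz₀S : z₀ ∈ S := ⟨hz₀U, δ/16, by positivity,
    fun w hw => (hB₀U hw).1, hseed.uniformCauchySeqOn⟩
  have hUconn : IsPreconnected U := annulus_preconnected a a' ε₀ δ hd0 hsubB ha'B
  have hUS : U ⊆ S := by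
    have hdisj : Disjoint S T := Set.disjoint_left.mpr (fun x hxS hxT => hxT.2 hxS)
    have hcover : U ⊆ S ∪ T := fun z hz => (em (z ∈ S)).elim Or.inl (fun h' => Or.inr ⟨hz, h'⟩)
    exact IsPreconnected.subset_left_of_subset_union hSopen hTopen hdisj hcover
      ⟨z₀, hz₀U, hz₀S⟩ hUconn
  have hUball : ∀ z ∈ U, ∃ r > 0, ball z r ⊆ U ∧ UniformCauchySeqOn G atTop (ball z r) :=
    fun z hz => (hUS hz).2
  -- the pointwise limit of G on U
  set 𝒢 : ℂ → ℂ := fun z => limUnder atTop (fun n => G n z) with h𝒢def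
  have hGtend : ∀ z ∈ U, Tendsto (fun n => G n z) atTop (𝓝 (𝒢 z)) := by
    intro z hz
    obtain ⟨r, hr, hrU, hc⟩ := hUball z hz
    have hcs : CauchySeq (fun n => G n z) := by
      rw [Metric.cauchySeq_iff]
      intro ε hε
      obtain ⟨N, hN⟩ := Metric.uniformCauchySeqOn_iff.mp hc ε hε
      exact ⟨N, fun mm hmm nn hnn => hN mm hmm nn hnn z (mem_ball_self hr)⟩
    exact hcs.tendsto_limUnder
  -- locally uniform convergence on U
  have hlocu : TendstoLocallyUniformlyOn G 𝒢 atTop U := by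
    intro u hu z hz
    obtain ⟨r, hr, hrU, hc⟩ := hUball z hz
    have htu : TendstoUniformlyOn G 𝒢 atTop (ball z r) :=
      hc.tendstoUniformlyOn_of_tendsto (fun x hx => hGtend x (hrU hx))
    exact ⟨ball z r, mem_nhdsWithin_of_mem_nhds (ball_mem_nhds z hr), htu u hu⟩
  have keyU : ∀ K ⊆ U, IsCompact K → TendstoUniformlyOn G 𝒢 atTop K :=
    fun K hKU hK => (tendstoLocallyUniformlyOn_iff_forall_isCompact hUopen).mp hlocu K hKU hK
  have h𝒢diff : DifferentiableOn ℂ 𝒢 U :=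
    hlocu.differentiableOn (Eventually.of_forall
      (fun n => fun z hz => (hGdiff n z hz).differentiableWithinAt)) hUopen
  -- 𝒢 agrees with H₀ on the seed ball and never vanishes on U
  have hseedeq : ∀ z ∈ ball z₀ (δ/16), 𝒢 z = H₀ z := fun z hz =>
    tendsto_nhds_unique (hGtend z (hB₀U hz).1) (hseed.tendsto_at hz)
  have h𝒢ne : ∀ w ∈ U, 𝒢 w ≠ 0 := by
    intro w hw hw0
    have hG_an : AnalyticOnNhd ℂ 𝒢 U := h𝒢diff.analyticOnNhd hUopen
    rcases (hG_an w hw).eventually_eq_zero_or_eventually_ne_zero with hcase | hcase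
    · have hzero := hG_an.eqOn_zero_of_preconnected_of_eventuallyEq_zero hUconn hw
        (by filter_upwards [hcase] with x hx; exact hx)
      have h1 : 𝒢 z₀ = 0 := hzero hz₀U
      rw [hseedeq z₀ (mem_ball_self (by positivity)), hH₀def] at h1
      have h2 : h z₀ - b' = 0 := by
        by_contra hnn
        exact hnn (by rwa [inv_eq_zero] at h1)
      have h3 : z₀ = a' := hinjh (hB₀U (mem_ball_self (by positivity))).2 (mem_ball_self hd0)
        (by rw [sub_eq_zero] at h2; rw [h2, hha])
      rw [h3, dist_self] at hz₀a'
      linarith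
    · rw [eventually_nhdsWithin_iff] at hcase
      obtain ⟨t, ht, htne⟩ := Metric.eventually_nhds_iff.mp hcase
      obtain ⟨RU, hRU0, hRUU⟩ := Metric.isOpen_iff.mp hUopen w hw
      set r := min (t/2) (RU/2) with hrdef
      have hr0 : 0 < r := lt_min (by linarith) (by linarith)
      have hcbU : closedBall w r ⊆ U := by
        refine (closedBall_subset_ball ?_).trans hRUU
        exact lt_of_le_of_lt (min_le_right _ _) (by linarith)
      have hsphne : ∀ z ∈ sphere w r, 𝒢 z ≠ 0 := by
        intro z hz
        have hd := mem_sphere.mp hz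
        refine htne (by rw [hd]; exact lt_of_le_of_lt (min_le_left _ _) (by linarith)) ?_
        intro hzw
        rw [hzw, dist_self] at hd
        exact hr0.ne hd
      have hsne2 : (sphere w r).Nonempty := NormedSpace.sphere_nonempty.mpr hr0.le
      have hcont𝒢 : ContinuousOn 𝒢 (sphere w r) :=
        (h𝒢diff.continuousOn).mono ((sphere_subset_closedBall).trans hcbU)
      obtain ⟨zm2, hzm2, hzmin2⟩ := (isCompact_sphere w r).exists_isMinOn hsne2
        (Continuous.comp_continuousOn continuous_norm hcont𝒢)
      set m₂ := ‖𝒢 zm2‖ with hm₂def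
      have hm₂0 : 0 < m₂ := norm_pos_iff.mpr (hsphne zm2 hzm2)
      have hcv2 := Metric.tendstoUniformlyOn_iff.mp
        (keyU (closedBall w r) hcbU (isCompact_closedBall w r)) (m₂/3) (by positivity)
      obtain ⟨n, hn⟩ := hcv2.exists
      have hbnd : ∀ z ∈ sphere w r, 2*m₂/3 ≤ ‖G n z - 0‖ := by
        intro z hz
        have h1 : m₂ ≤ ‖𝒢 z‖ := hzmin2 hz
        have h2 : dist (𝒢 z) (G n z) < m₂/3 := hn z (sphere_subset_closedBall hz)
        rw [dist_eq_norm] at h2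
        have h3 : ‖𝒢 z‖ ≤ ‖𝒢 z - G n z‖ + ‖G n z - 0‖ := by
          rw [sub_zero]
          calc ‖𝒢 z‖ = ‖(𝒢 z - G n z) + G n z‖ := by ring_nf
          _ ≤ _ := norm_add_le _ _
        linarith
      have hctr : ‖G n w - 0‖ < 2*m₂/3 := by
        have h2 : dist (𝒢 w) (G n w) < m₂/3 := hn w (mem_closedBall_self hr0.le)
        rw [hw0, dist_eq_norm, zero_sub, norm_neg] at h2
        rw [sub_zero]
        linarith
      obtain ⟨w', hw', hGw'⟩ := attains_aux (G n) w 0 r (2*m₂/3) hr0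
        (fun z hz => hGdiff n z (hcbU hz)) hbnd hctr
      exact inv_ne_zero (hne' n w' (hcbU (ball_subset_closedBall hw'))) hGw'
  -- the limit function
  set f : ℂ → ℂ := fun z => if z ∈ ball a' δ then h z else b' + (𝒢 z)⁻¹ with hfdef
  have hfball : ∀ z ∈ ball a' δ, f z = h z := fun z hz => if_pos hz
  have hcoverU : ∀ z ∈ ball a ε₀, z ∉ ball a' δ → z ∈ U := by
    intro z hz hznb
    exact ⟨hz, fun hc => hznb (closedBall_subset_ball (by linarith) hc)⟩
  have hgid : ∀ n, ∀ z ∈ U, g' n z = b' + (G n z)⁻¹ := by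
    intro n z hz
    rw [hGdef]
    simp only [inv_inv]
    ring
  have hptU : ∀ z ∈ U, Tendsto (fun n => g' n z) atTop (𝓝 (b' + (𝒢 z)⁻¹)) := by
    intro z hz
    have := (((hGtend z hz).inv₀ (h𝒢ne z hz)).const_add b')
    exact this.congr (fun n => (hgid n z hz).symm)
  have hfU : ∀ z ∈ U, f z = b' + (𝒢 z)⁻¹ := by
    intro z hz
    by_cases hzb : z ∈ ball a' δ
    · rw [hfball z hzb]
      exact tendsto_nhds_unique (hu'.tendsto_at hzb) (hptU z hz)
    · rw [hfdef]
      simp only [if_neg hzb]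
  have hptf : ∀ z ∈ ball a ε₀, Tendsto (fun n => g' n z) atTop (𝓝 (f z)) := by
    intro z hz
    by_cases hzb : z ∈ ball a' δ
    · rw [hfball z hzb]
      exact hu'.tendsto_at hzb
    · rw [hfU z (hcoverU z hz hzb)]
      exact hptU z (hcoverU z hz hzb)
  -- differentiability of f
  have hfdiff : ∀ z ∈ ball a ε₀, DifferentiableAt ℂ f z := by
    intro z hz
    by_cases hzb : z ∈ ball a' δ
    · have heq : f =ᶠ[𝓝 z] h :=
        eventuallyEq_iff_exists_mem.mpr ⟨ball a' δ, isOpen_ball.mem_nhds hzb, hfball⟩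
      exact (hholh z hzb).congr_of_eventuallyEq heq
    · have hzU : z ∈ U := hcoverU z hz hzb
      have heq : f =ᶠ[𝓝 z] (fun w => b' + (𝒢 w)⁻¹) :=
        eventuallyEq_iff_exists_mem.mpr ⟨U, hUopen.mem_nhds hzU, hfU⟩
      have hd : DifferentiableAt ℂ (fun w => b' + (𝒢 w)⁻¹) z :=
        (((h𝒢diff.differentiableAt (hUopen.mem_nhds hzU)).inv (h𝒢ne z hzU)).const_add b')
      exact hd.congr_of_eventuallyEq heq
  -- uniform convergence of g' to f on compact subsets of the ball
  have hfconv : ∀ K ⊆ ball a ε₀, IsCompact K → TendstoUniformlyOn g' f atTop K := by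
    intro K hK hKc
    set K₁ := K ∩ closedBall a' (3*δ/4) with hK₁def
    set K₂ := K \ ball a' (3*δ/4) with hK₂def
    have hK₁b : K₁ ⊆ ball a' δ := fun z hz =>
      mem_ball.mpr (lt_of_le_of_lt (mem_closedBall.mp hz.2) (by linarith))
    have hK₂U : K₂ ⊆ U := by
      intro z hz
      refine ⟨hK hz.1, fun hc => hz.2 ?_⟩
      exact mem_ball.mpr (lt_of_le_of_lt (mem_closedBall.mp hc) (by linarith))
    have hconv1 : TendstoUniformlyOn g' f atTop K₁ := by
      rw [Metric.tendstoUniformlyOn_iff]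
      intro η hη
      filter_upwards [Metric.tendstoUniformlyOn_iff.mp (hu'.mono hK₁b) η hη] with n hn x hx
      rw [hfball x (hK₁b hx)]
      exact hn x hx
    have hconv2 : TendstoUniformlyOn g' f atTop K₂ := by
      rcases K₂.eq_empty_or_nonempty with hemp | hne2
      · rw [Metric.tendstoUniformlyOn_iff]
        intro η hη
        filter_upwards with n x hx
        rw [hemp] at hx
        exact absurd hx (Set.notMem_empty x)
      · have hK₂c : IsCompact K₂ := hKc.diff isOpen_ball
        have hcont𝒢2 : ContinuousOn 𝒢 K₂ := (h𝒢diff.continuousOn).mono hK₂U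
        obtain ⟨zc, hzc, hzcmin⟩ := hK₂c.exists_isMinOn hne2
          (Continuous.comp_continuousOn continuous_norm hcont𝒢2)
        set c₂ := ‖𝒢 zc‖ with hc₂def
        have hc₂0 : 0 < c₂ := norm_pos_iff.mpr (h𝒢ne zc (hK₂U hzc))
        rw [Metric.tendstoUniformlyOn_iff]
        intro η hη
        have hbd := Metric.tendstoUniformlyOn_iff.mp (keyU K₂ hK₂U hK₂c)
          (min (c₂/2) (η * (c₂ * c₂) / 2)) (by positivity)
        filter_upwards [hbd] with n hn x hx
        have h1 : dist (𝒢 x) (G n x) < min (c₂/2) (η * (c₂ * c₂) / 2) := hn x hx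
        have h2 : c₂ ≤ ‖𝒢 x‖ := hzcmin hx
        have h3 : c₂/2 ≤ ‖G n x‖ := by
          have := lt_of_lt_of_le h1 (min_le_left _ _)
          rw [dist_eq_norm] at this
          have h4 : ‖𝒢 x‖ ≤ ‖𝒢 x - G n x‖ + ‖G n x‖ := by
            calc ‖𝒢 x‖ = ‖(𝒢 x - G n x) + G n x‖ := by ring_nf
            _ ≤ _ := norm_add_le _ _
          linarith
        have h𝒢x : 𝒢 x ≠ 0 := h𝒢ne x (hK₂U hx)
        have hGx : G n x ≠ 0 := by
          intro h0
          rw [h0, norm_zero] at h3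
          linarith
        rw [hfU x (hK₂U hx), hgid n x (hK₂U hx), dist_add_left, dist_eq_norm]
        have hid : (𝒢 x)⁻¹ - (G n x)⁻¹ = (G n x - 𝒢 x) * ((𝒢 x)⁻¹ * (G n x)⁻¹) := by
          field_simp
        rw [hid, norm_mul, norm_mul, norm_inv, norm_inv]
        have h5 : ‖G n x - 𝒢 x‖ < η * (c₂ * c₂) / 2 := by
          rw [norm_sub_rev, ← dist_eq_norm]
          exact lt_of_lt_of_le h1 (min_le_right _ _)
        have hia : ‖𝒢 x‖⁻¹ ≤ c₂⁻¹ := inv_anti₀ hc₂0 h2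
        have hib : ‖G n x‖⁻¹ ≤ (c₂/2)⁻¹ := inv_anti₀ (by positivity) h3
        calc ‖G n x - 𝒢 x‖ * (‖𝒢 x‖⁻¹ * ‖G n x‖⁻¹)
            ≤ ‖G n x - 𝒢 x‖ * (c₂⁻¹ * (c₂/2)⁻¹) := by
              refine mul_le_mul_of_nonneg_left
                (mul_le_mul hia hib (by positivity) (by positivity)) (norm_nonneg _)
        _ < (η * (c₂ * c₂) / 2) * (c₂⁻¹ * (c₂/2)⁻¹) := by
              refine mul_lt_mul_of_pos_right h5 (by positivity)
        _ = η := by field_simp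
    have hKsplit : K ⊆ K₁ ∪ K₂ := by
      intro z hz
      by_cases hzc : z ∈ closedBall a' (3*δ/4)
      · exact Or.inl ⟨hz, hzc⟩
      · exact Or.inr ⟨hz, fun hb => hzc (ball_subset_closedBall hb)⟩
    exact (tuo_union hconv1 hconv2).mono hKsplit
  -- injectivity of f
  have hfinj : Set.InjOn f (ball a ε₀) := by
    intro z₁ hz₁ z₂ hz₂ hfeq
    by_contra hne12
    have hfan : AnalyticOnNhd ℂ f (ball a ε₀) :=
      DifferentiableOn.analyticOnNhd
        (fun z hz => (hfdiff z hz).differentiableWithinAt) isOpen_ball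
    have han2 : AnalyticAt ℂ (fun z => f z - f z₂) z₂ := (hfan z₂ hz₂).sub analyticAt_const
    rcases han2.eventually_eq_zero_or_eventually_ne_zero with hcase | hcase
    · have hzero := AnalyticOnNhd.eqOn_zero_of_preconnected_of_eventuallyEq_zero
        (hfan.sub (analyticOnNhd_const (v := f z₂)))
        ((convex_ball a ε₀).isPreconnected) hz₂
        (by filter_upwards [hcase] with x hx; exact hx)
      set w2 : ℂ := a' + ((δ/2 : ℝ) : ℂ) with hw2def
      have hw2a : dist w2 a' = δ/2 := by
        rw [hw2def, dist_eq_norm, add_sub_cancel_left, Complex.norm_real, Real.norm_eq_abs,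
          abs_of_pos (by positivity)]
      have hw2b : w2 ∈ ball a' δ := mem_ball.mpr (by rw [hw2a]; linarith)
      have e1 : f a' - f z₂ = 0 := hzero (hsubB (mem_ball_self hd0))
      have e2 : f w2 - f z₂ = 0 := hzero (hsubB hw2b)
      rw [sub_eq_zero] at e1 e2
      have e3 : h a' = h w2 := by
        rw [← hfball a' (mem_ball_self hd0), ← hfball w2 hw2b, e1, e2]
      have e4 : a' = w2 := hinjh (mem_ball_self hd0) hw2b e3
      rw [← e4, dist_self] at hw2a
      linarith
    · rw [eventually_nhdsWithin_iff] at hcase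
      obtain ⟨t, ht, htne⟩ := Metric.eventually_nhds_iff.mp hcase
      obtain ⟨Rz, hRz0, hRzU⟩ := Metric.isOpen_iff.mp isOpen_ball z₂ hz₂
      have hd12 : 0 < dist z₁ z₂ := dist_pos.mpr hne12
      set r := min (min (t/2) (Rz/2)) (dist z₁ z₂ / 2) with hrdef
      have hr0 : 0 < r := lt_min (lt_min (by linarith) (by linarith)) (by linarith)
      have hcb : closedBall z₂ r ⊆ ball a ε₀ := by
        refine (closedBall_subset_ball ?_).trans hRzU
        exact lt_of_le_of_lt ((min_le_left _ _).trans (min_le_right _ _)) (by linarith)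
      have hsphne : ∀ z ∈ sphere z₂ r, f z - f z₂ ≠ 0 := by
        intro z hz
        refine htne ?_ ?_
        · rw [mem_sphere.mp hz]
          exact lt_of_le_of_lt ((min_le_left _ _).trans (min_le_left _ _)) (by linarith)
        · intro hzz
          have := mem_sphere.mp hz
          rw [hzz, dist_self] at this
          exact hr0.ne this
      have hsne3 : (sphere z₂ r).Nonempty := NormedSpace.sphere_nonempty.mpr hr0.le
      have hcontf : ContinuousOn (fun z => f z - f z₂) (sphere z₂ r) := by
        refine ContinuousOn.sub ?_ continuousOn_const
        exact fun z hz => (hfdiff z (hcb (sphere_subset_closedBall hz))).continuousAt.continuousWithinAt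
      obtain ⟨zm3, hzm3, hzmin3⟩ := (isCompact_sphere z₂ r).exists_isMinOn hsne3
        (Continuous.comp_continuousOn continuous_norm hcontf)
      set m₃ := ‖f zm3 - f z₂‖ with hm₃def
      have hm₃0 : 0 < m₃ := norm_pos_iff.mpr (hsphne zm3 hzm3)
      set K' : Set ℂ := insert z₁ (closedBall z₂ r) with hK'def
      have hK'c : IsCompact K' := (isCompact_closedBall z₂ r).insert z₁
      have hK'sub : K' ⊆ ball a ε₀ := Set.insert_subset hz₁ hcb
      obtain ⟨n, hn⟩ :=
        (Metric.tendstoUniformlyOn_iff.mp (hfconv K' hK'sub hK'c) (m₃/5) (by positivity)).exists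
      have hnz₁ : dist (f z₁) (g' n z₁) < m₃/5 := hn z₁ (Set.mem_insert _ _)
      have hbnd : ∀ z ∈ sphere z₂ r, 3*m₃/5 ≤ ‖g' n z - g' n z₁‖ := by
        intro z hz
        have h1 : m₃ ≤ ‖f z - f z₂‖ := hzmin3 hz
        have h2 : ‖f z - g' n z‖ < m₃/5 := by
          rw [← dist_eq_norm]
          exact hn z (Set.mem_insert_of_mem _ (sphere_subset_closedBall hz))
        have h3 : ‖g' n z₁ - f z₂‖ < m₃/5 := by
          rw [← hfeq, norm_sub_rev, ← dist_eq_norm]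
          exact hnz₁
        have h4 : ‖f z - f z₂‖ ≤ ‖f z - g' n z‖ + ‖g' n z - g' n z₁‖ + ‖g' n z₁ - f z₂‖ := by
          calc ‖f z - f z₂‖
              = ‖(f z - g' n z) + (g' n z - g' n z₁) + (g' n z₁ - f z₂)‖ := by ring_nf
          _ ≤ _ := norm_add₃_le
        linarith
      have hctr : ‖g' n z₂ - g' n z₁‖ < 3*m₃/5 := by
        have h1 : ‖g' n z₂ - f z₂‖ < m₃/5 := by
          rw [norm_sub_rev, ← dist_eq_norm]
          exact hn z₂ (Set.mem_insert_of_mem _ (mem_closedBall_self hr0.le))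
        have h2 : ‖f z₂ - g' n z₁‖ < m₃/5 := by
          rw [← hfeq, ← dist_eq_norm]
          exact hnz₁
        calc ‖g' n z₂ - g' n z₁‖ ≤ ‖g' n z₂ - f z₂‖ + ‖f z₂ - g' n z₁‖ := by
              calc ‖g' n z₂ - g' n z₁‖ = ‖(g' n z₂ - f z₂) + (f z₂ - g' n z₁)‖ := by ring_nf
              _ ≤ _ := norm_add_le _ _
        _ < 3*m₃/5 := by linarith
      obtain ⟨w, hwball, hgww⟩ := attains_aux (g' n) z₂ (g' n z₁) r (3*m₃/5) hr0
        (fun z hz => hg'diff n z (hcb hz)) hbnd hctr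
      have hwD : w ∈ D (n + N₀) := (hDn n).2 (hcb (ball_subset_closedBall hwball))
      have hz₁D : z₁ ∈ D (n + N₀) := (hDn n).2 hz₁
      have hweq : w = z₁ := inj (n + N₀) hwD hz₁D hgww
      have := mem_ball.mp hwball
      rw [hweq] at this
      have hrle : r ≤ dist z₁ z₂ / 2 := min_le_right _ _
      linarith
  -- f a = b
  have hfab : f a = b := by
    have hH2 : ∀ k : ℕ, ∃ a2 ∈ ball a (min (1/((k:ℝ)+1)) ε₀), ∃ b2 ∈ ball b (min (1/((k:ℝ)+1)) ε₀),
        ∃ δ2 > (0 : ℝ), (∀ᶠ n in atTop, ball a2 δ2 ⊆ D n) ∧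
        ∃ h2 : ℂ → ℂ, TendstoUniformlyOn g h2 atTop (ball a2 δ2) ∧
          (∀ z ∈ ball a2 δ2, DifferentiableAt ℂ h2 z) ∧
          Set.InjOn h2 (ball a2 δ2) ∧ h2 a2 = b2 := by
      intro k
      exact H _ (lt_min (by positivity) hε₀)
    choose a2 ha2 b2 hb2 δ2 hδ2 hP h2 hq1 hq2 hq3 hq4 using hH2
    have hfa2 : ∀ k, f (a2 k) = b2 k := by
      intro k
      have hk1 : a2 k ∈ ball a ε₀ :=
        mem_ball.mpr (lt_of_lt_of_le (mem_ball.mp (ha2 k)) (min_le_right _ _))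
      have t1 : Tendsto (fun n => g n (a2 k)) atTop (𝓝 (b2 k)) := by
        have := (hq1 k).tendsto_at (mem_ball_self (hδ2 k))
        rwa [hq4 k] at this
      have t2 : Tendsto (fun n => g' n (a2 k)) atTop (𝓝 (b2 k)) :=
        (tendsto_add_atTop_iff_nat N₀).mpr t1
      exact tendsto_nhds_unique (hptf _ hk1) t2
    have hak : Tendsto a2 atTop (𝓝 a) := by
      rw [tendsto_iff_dist_tendsto_zero]
      refine squeeze_zero (fun k => dist_nonneg) (fun k => ?_)
        tendsto_one_div_add_atTop_nhds_zero_nat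
      exact (lt_of_lt_of_le (mem_ball.mp (ha2 k)) (min_le_left _ _)).le
    have hbk : Tendsto b2 atTop (𝓝 b) := by
      rw [tendsto_iff_dist_tendsto_zero]
      refine squeeze_zero (fun k => dist_nonneg) (fun k => ?_)
        tendsto_one_div_add_atTop_nhds_zero_nat
      exact (lt_of_lt_of_le (mem_ball.mp (hb2 k)) (min_le_left _ _)).le
    have hfc : ContinuousAt f a := (hfdiff a (mem_ball_self hε₀)).continuousAt
    have hfl : Tendsto (fun k => f (a2 k)) atTop (𝓝 (f a)) := hfc.tendsto.comp hak
    have hfl' : Tendsto b2 atTop (𝓝 (f a)) := hfl.congr (fun k => hfa2 k)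
    exact tendsto_nhds_unique hfl' hbk
  -- conclusion
  refine ⟨f, ?_, hfdiff, hfinj, hfab⟩
  intro K hK hKc
  intro u hu
  exact ev_shift N₀ ((hfconv K hK hKc) u hu)
end

section
/- Let d ∈ ℕ and let (P_n) be a sequence of polynomials with complex coefficients, each of degree at most d. Suppose there is a nonempty open set V ⊆ ℂ such that for every z ∈ V the sequence (P_n(z)) converges in ℂ. Then for every k the sequence of coefficients (coefficient of z^k in P_n) converges; moreover, denoting by P the polynomial whose k-th coefficient is the limit of the k-th coefficients, the sequence (P_n) converges to P uniformly on every compact subset of ℂ, and P has degree at most d. -/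
open Filter Topology

private lemma term_unif {K : Set ℂ} (hK : IsCompact K) (k : ℕ)
    (c : ℕ → ℂ) (c' : ℂ) (hc : Tendsto c atTop (𝓝 c')) :
    TendstoUniformlyOn (fun n z => c n * z ^ k) (fun z => c' * z ^ k) atTop K := by
  obtain ⟨M, hM⟩ := hK.exists_bound_of_continuousOn continuousOn_id
  set B : ℝ := (max M 0) ^ k + 1 with hB
  have hBpos : 0 < B := by positivity
  rw [Metric.tendstoUniformlyOn_iff]
  intro ε hε
  have h1 : Tendsto (fun n => ‖c' - c n‖) atTop (𝓝 0) := by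
    have h0 : Tendsto (fun n => c' - c n) atTop (𝓝 (c' - c')) :=
      Tendsto.sub tendsto_const_nhds hc
    simpa using h0.norm
  filter_upwards [(h1.eventually (gt_mem_nhds (show 0 < ε / B by positivity)))] with n hn z hz
  have hzM : ‖z‖ ≤ max M 0 := le_trans (hM z hz) (le_max_left _ _)
  have hzk : ‖z ^ k‖ ≤ B := by
    rw [norm_pow]
    calc ‖z‖ ^ k ≤ (max M 0) ^ k := pow_le_pow_left₀ (norm_nonneg z) hzM k
      _ ≤ B := by simp [hB]
  have : dist (c' * z ^ k) (c n * z ^ k) = ‖c' - c n‖ * ‖z ^ k‖ := by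
    rw [dist_eq_norm, ← sub_mul, norm_mul]
  rw [this]
  calc ‖c' - c n‖ * ‖z ^ k‖ ≤ ‖c' - c n‖ * B :=
        mul_le_mul_of_nonneg_left hzk (norm_nonneg _)
    _ < (ε / B) * B := by
        exact mul_lt_mul_of_pos_right hn hBpos
    _ = ε := div_mul_cancel₀ ε (ne_of_gt hBpos)

/-- A sequence of polynomials of degree at most `d` converging pointwise on a nonempty
open set `V ⊆ ℂ` has converging coefficients; the limit polynomial `P` (whose `k`-th
coefficient is the limit of the `k`-th coefficients) has degree at most `d`, and the
sequence converges to `P` uniformly on every compact subset of `ℂ`. -/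
theorem stmt_10 (d : ℕ) (Pn : ℕ → Polynomial ℂ)
    (hdeg : ∀ n, (Pn n).degree ≤ (d : ℕ))
    (V : Set ℂ) (hVopen : IsOpen V) (hVne : V.Nonempty)
    (hconv : ∀ z ∈ V, ∃ l : ℂ, Tendsto (fun n => (Pn n).eval z) atTop (𝓝 l)) :
    (∀ k : ℕ, ∃ c : ℂ, Tendsto (fun n => (Pn n).coeff k) atTop (𝓝 c)) ∧
    ∃ P : Polynomial ℂ,
      (∀ k : ℕ, Tendsto (fun n => (Pn n).coeff k) atTop (𝓝 (P.coeff k))) ∧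
      (∀ K : Set ℂ, IsCompact K →
        TendstoUniformlyOn (fun n z => (Pn n).eval z) (fun z => P.eval z) atTop K) ∧
      P.degree ≤ (d : ℕ) := by
  classical
  obtain ⟨x, hx⟩ := hVne
  have hVinf : V.Infinite := infinite_of_mem_nhds x (hVopen.mem_nhds hx)
  obtain ⟨s, hsV, hscard⟩ := hVinf.exists_subset_card_eq (d + 1)
  have hinj : Set.InjOn (id : ℂ → ℂ) ↑s := Set.injOn_id _
  -- limit function on nodes
  set l : ℂ → ℂ := fun z => if h : z ∈ V then (hconv z h).choose else 0 with hl
  have hlim : ∀ z ∈ V, Tendsto (fun n => (Pn n).eval z) atTop (𝓝 (l z)) := by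
    intro z hz
    simp only [hl, dif_pos hz]
    exact (hconv z hz).choose_spec
  set P : Polynomial ℂ := Lagrange.interpolate s id l with hP
  -- each Pn n equals its interpolation
  have hrep : ∀ n, Pn n = Lagrange.interpolate s id fun i => (Pn n).eval (id i) := by
    intro n
    refine Lagrange.eq_interpolate hinj ?_
    rw [hscard]
    exact lt_of_le_of_lt (hdeg n) (by exact_mod_cast Nat.lt_succ_self d)
  -- coefficient convergence
  have hcoeff : ∀ k : ℕ, Tendsto (fun n => (Pn n).coeff k) atTop (𝓝 (P.coeff k)) := by
    intro k
    have hco : ∀ n, (Pn n).coeff k =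
        ∑ i ∈ s, (Pn n).eval i * (Lagrange.basis s id i).coeff k := by
      intro n
      conv_lhs => rw [hrep n]
      simp [Lagrange.interpolate_apply, Polynomial.finset_sum_coeff, Polynomial.coeff_C_mul]
    have hPco : P.coeff k = ∑ i ∈ s, l i * (Lagrange.basis s id i).coeff k := by
      simp [hP, Lagrange.interpolate_apply, Polynomial.finset_sum_coeff, Polynomial.coeff_C_mul]
    simp only [hco, hPco]
    exact tendsto_finset_sum _ fun i hi =>
      ((hlim i (hsV hi)).mul tendsto_const_nhds)
  have hPdeg : P.degree ≤ (d : ℕ) := by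
    have h := Lagrange.degree_interpolate_lt l hinj
    rw [hscard] at h
    rw [← hP] at h
    rcases hD : P.degree with _ | m
    · exact bot_le
    · rw [hD] at h
      have hm : m < d + 1 := by
        rw [Nat.cast_withBot] at h
        exact WithBot.coe_lt_coe.mp h
      rw [Nat.cast_withBot]
      exact WithBot.coe_le_coe.mpr (Nat.lt_succ_iff.mp hm)
  refine ⟨fun k => ⟨P.coeff k, hcoeff k⟩, P, hcoeff, ?_, hPdeg⟩
  intro K hK
  have hnd : ∀ n, (Pn n).natDegree < d + 1 :=
    fun n => Nat.lt_succ_of_le (Polynomial.natDegree_le_iff_degree_le.mpr (hdeg n))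
  have hPnd : P.natDegree < d + 1 :=
    Nat.lt_succ_of_le (Polynomial.natDegree_le_iff_degree_le.mpr hPdeg)
  have hsum : TendstoUniformlyOn
      (fun n z => ∑ k ∈ Finset.range (d + 1), (Pn n).coeff k * z ^ k)
      (fun z => ∑ k ∈ Finset.range (d + 1), P.coeff k * z ^ k) atTop K := by
    induction (Finset.range (d + 1)) using Finset.induction_on with
    | empty =>
      simp only [Finset.sum_empty]
      intro u hu
      filter_upwards with n z _
      exact refl_mem_uniformity hu
    | insert _ _ hnotmem ih =>
      simp only [Finset.sum_insert hnotmem]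
      exact (term_unif hK _ _ _ (hcoeff _)).add ih
  refine (hsum.congr ?_).congr_right ?_
  · filter_upwards with n
    intro z hz
    exact (Polynomial.eval_eq_sum_range' (hnd n) z).symm
  · intro z hz
    exact (Polynomial.eval_eq_sum_range' hPnd z).symm
end

section
/- For i = 1, 2, 3, 4 let (z_i^{(n)}) be sequences in ℂ with z_i^{(n)} → z_i′ as n → ∞, let (λ_n) be a sequence in ℂ, and define ζ_n(z) = λ_n·( −1/(z − z₁^{(n)}) + 1/(z − z₂^{(n)}) − 1/(z − z₃^{(n)}) + 1/(z − z₄^{(n)}) ). Suppose there is a nonempty open set V whose closure is compact and contained in ℂ ∖ {z₁′, z₂′, z₃′, z₄′}, such that (ζ_n) converges uniformly on V. Then there exists a polynomial P of degree at most 2 such that (ζ_n) converges, uniformly on every compact subset of ℂ ∖ {z₁′, z₂′, z₃′, z₄′}, to the function z ↦ P(z) / ((z − z₁′)(z − z₂′)(z − z₃′)(z − z₄′)). -/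
open Filter Topology

/-- Algebraic identity: clearing denominators in the four-pole partial fraction. -/
lemma key_alg (lam a b c d w : ℂ) (ha : w ≠ a) (hb : w ≠ b) (hc : w ≠ c) (hd : w ≠ d) :
    lam * (-(w - a)⁻¹ + (w - b)⁻¹ - (w - c)⁻¹ + (w - d)⁻¹)
      * ((w - a) * (w - b) * (w - c) * (w - d))
      = lam * (b + d - a - c) * w ^ 2 + lam * (2 * a * c - 2 * b * d) * w
        + lam * (b * c * d - a * c * d + a * b * d - a * b * c) := by
  have ha' : w - a ≠ 0 := sub_ne_zero.mpr ha
  have hb' : w - b ≠ 0 := sub_ne_zero.mpr hb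
  have hc' : w - c ≠ 0 := sub_ne_zero.mpr hc
  have hd' : w - d ≠ 0 := sub_ne_zero.mpr hd
  field_simp
  ring

/-- Division form of `key_alg`. -/
lemma key_div (lam a b c d w : ℂ) (ha : w ≠ a) (hb : w ≠ b) (hc : w ≠ c) (hd : w ≠ d) :
    lam * (-(w - a)⁻¹ + (w - b)⁻¹ - (w - c)⁻¹ + (w - d)⁻¹)
      = (lam * (b + d - a - c) * w ^ 2 + lam * (2 * a * c - 2 * b * d) * w
          + lam * (b * c * d - a * c * d + a * b * d - a * b * c))
        / ((w - a) * (w - b) * (w - c) * (w - d)) := by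
  rw [eq_div_iff (mul_ne_zero (mul_ne_zero (mul_ne_zero (sub_ne_zero.mpr ha)
    (sub_ne_zero.mpr hb)) (sub_ne_zero.mpr hc)) (sub_ne_zero.mpr hd))]
  exact key_alg lam a b c d w ha hb hc hd

lemma lagrange_e2 (w0 w1 w2 e2 e1 e0 : ℂ) (h01 : w0 ≠ w1) (h02 : w0 ≠ w2) (h12 : w1 ≠ w2) :
    (e2 * w0 ^ 2 + e1 * w0 + e0) / ((w0 - w1) * (w0 - w2))
      + (e2 * w1 ^ 2 + e1 * w1 + e0) / ((w1 - w0) * (w1 - w2))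
      + (e2 * w2 ^ 2 + e1 * w2 + e0) / ((w2 - w0) * (w2 - w1)) = e2 := by
  have h01' : w0 - w1 ≠ 0 := sub_ne_zero.mpr h01
  have h02' : w0 - w2 ≠ 0 := sub_ne_zero.mpr h02
  have h12' : w1 - w2 ≠ 0 := sub_ne_zero.mpr h12
  have h10' : w1 - w0 ≠ 0 := sub_ne_zero.mpr h01.symm
  have h20' : w2 - w0 ≠ 0 := sub_ne_zero.mpr h02.symm
  have h21' : w2 - w1 ≠ 0 := sub_ne_zero.mpr h12.symm
  field_simp
  ring

lemma lagrange_e1 (w0 w1 w2 e2 e1 e0 : ℂ) (h01 : w0 ≠ w1) (h02 : w0 ≠ w2) (h12 : w1 ≠ w2) :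
    -((e2 * w0 ^ 2 + e1 * w0 + e0) * (w1 + w2) / ((w0 - w1) * (w0 - w2))
      + (e2 * w1 ^ 2 + e1 * w1 + e0) * (w0 + w2) / ((w1 - w0) * (w1 - w2))
      + (e2 * w2 ^ 2 + e1 * w2 + e0) * (w0 + w1) / ((w2 - w0) * (w2 - w1))) = e1 := by
  have h01' : w0 - w1 ≠ 0 := sub_ne_zero.mpr h01
  have h02' : w0 - w2 ≠ 0 := sub_ne_zero.mpr h02
  have h12' : w1 - w2 ≠ 0 := sub_ne_zero.mpr h12
  have h10' : w1 - w0 ≠ 0 := sub_ne_zero.mpr h01.symm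
  have h20' : w2 - w0 ≠ 0 := sub_ne_zero.mpr h02.symm
  have h21' : w2 - w1 ≠ 0 := sub_ne_zero.mpr h12.symm
  field_simp
  ring

lemma lagrange_e0 (w0 w1 w2 e2 e1 e0 : ℂ) (h01 : w0 ≠ w1) (h02 : w0 ≠ w2) (h12 : w1 ≠ w2) :
    (e2 * w0 ^ 2 + e1 * w0 + e0) * (w1 * w2) / ((w0 - w1) * (w0 - w2))
      + (e2 * w1 ^ 2 + e1 * w1 + e0) * (w0 * w2) / ((w1 - w0) * (w1 - w2))
      + (e2 * w2 ^ 2 + e1 * w2 + e0) * (w0 * w1) / ((w2 - w0) * (w2 - w1)) = e0 := by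
  have h01' : w0 - w1 ≠ 0 := sub_ne_zero.mpr h01
  have h02' : w0 - w2 ≠ 0 := sub_ne_zero.mpr h02
  have h12' : w1 - w2 ≠ 0 := sub_ne_zero.mpr h12
  have h10' : w1 - w0 ≠ 0 := sub_ne_zero.mpr h01.symm
  have h20' : w2 - w0 ≠ 0 := sub_ne_zero.mpr h02.symm
  have h21' : w2 - w1 ≠ 0 := sub_ne_zero.mpr h12.symm
  field_simp
  ring

abbrev XSp : Type := (ℂ × ℂ × ℂ) × (Fin 4 → ℂ)

/-- Uniform convergence on a compact set of a continuous family evaluated along a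
convergent parameter sequence. -/
lemma param_unif {X : Type*} [UniformSpace X] [LocallyCompactSpace X]
    {Φ : X → ℂ → ℂ} {K : Set ℂ} (hK : IsCompact K)
    {x : X} {U : Set X} (hU : U ∈ 𝓝 x)
    (hΦ : ContinuousOn (fun q : X × ℂ => Φ q.1 q.2) (U ×ˢ K))
    {p : ℕ → X} (hp : Tendsto p atTop (𝓝 x)) :
    TendstoUniformlyOn (fun n w => Φ (p n) w) (fun w => Φ x w) atTop K := by
  obtain ⟨C, hxC, hCU, hCcomp⟩ := LocallyCompactSpace.local_compact_nhds x U hU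
  have huc : UniformContinuousOn (Function.uncurry Φ) (C ×ˢ K) :=
    IsCompact.uniformContinuousOn_of_continuous (hCcomp.prod hK)
      (hΦ.mono (Set.prod_mono hCU subset_rfl))
  have h := huc.tendstoUniformlyOn (mem_of_mem_nhds hxC)
  have hp' : Tendsto p atTop (𝓝[C] x) :=
    tendsto_nhdsWithin_iff.mpr ⟨hp, hp.eventually hxC⟩
  exact fun u hu => hp'.eventually (h u hu)

/-- Convergence argument of Method 2 (Section 1.5.2). For sequences `z i n → z' i`
(`i = 1,…,4`) and coefficients `λ n`, let
`ζ n z = λ n · (−1/(z−z₁ⁿ) + 1/(z−z₂ⁿ) − 1/(z−z₃ⁿ) + 1/(z−z₄ⁿ))`.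
If `ζ n` converges uniformly on a nonempty open set `V` whose closure is compact and
contained in `ℂ ∖ {z'₁,…,z'₄}`, then `ζ n` converges, uniformly on every compact subset of
`ℂ ∖ {z'₁,…,z'₄}`, to `z ↦ P(z)/((z−z'₁)(z−z'₂)(z−z'₃)(z−z'₄))` for some polynomial `P`
of degree at most 2. -/
theorem stmt_11 (z : Fin 4 → ℕ → ℂ) (z' : Fin 4 → ℂ)
    (hz : ∀ i, Tendsto (z i) atTop (𝓝 (z' i)))
    (lam : ℕ → ℂ)
    (ζ : ℕ → ℂ → ℂ)
    (hζ : ∀ n w, ζ n w = lam n * (-(w - z 0 n)⁻¹ + (w - z 1 n)⁻¹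
      - (w - z 2 n)⁻¹ + (w - z 3 n)⁻¹))
    (V : Set ℂ) (hVopen : IsOpen V) (hVne : V.Nonempty)
    (hVcl : IsCompact (closure V))
    (hVsub : closure V ⊆ {z' 0, z' 1, z' 2, z' 3}ᶜ)
    (hconv : ∃ g : ℂ → ℂ, TendstoUniformlyOn ζ g atTop V) :
    ∃ P : Polynomial ℂ, P.degree ≤ 2 ∧
      ∀ K ⊆ ({z' 0, z' 1, z' 2, z' 3}ᶜ : Set ℂ), IsCompact K →
        TendstoUniformlyOn ζ
          (fun w => P.eval w / ((w - z' 0) * (w - z' 1) * (w - z' 2) * (w - z' 3)))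
          atTop K := by
  classical
  obtain ⟨g, hg⟩ := hconv
  -- the coefficient sequences of the numerator polynomial
  set E2 : ℕ → ℂ := fun n => lam n * (z 1 n + z 3 n - z 0 n - z 2 n) with hE2def
  set E1 : ℕ → ℂ := fun n => lam n * (2 * z 0 n * z 2 n - 2 * z 1 n * z 3 n) with hE1def
  set E0 : ℕ → ℂ := fun n => lam n * (z 1 n * z 2 n * z 3 n - z 0 n * z 2 n * z 3 n
    + z 0 n * z 1 n * z 3 n - z 0 n * z 1 n * z 2 n) with hE0def
  set D' : ℂ → ℂ := fun w => (w - z' 0) * (w - z' 1) * (w - z' 2) * (w - z' 3) with hD'def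
  -- eventually the poles leave `closure V`
  have hz'clV : ∀ i, z' i ∉ closure V := by
    intro i hmem
    exact hVsub hmem (by fin_cases i <;> simp)
  have hzV : ∀ i, ∀ᶠ n in atTop, z i n ∉ closure V := fun i =>
    (hz i).eventually (isClosed_closure.isOpen_compl.mem_nhds (hz'clV i))
  -- the cleared products and their limits
  set q : ℂ → ℕ → ℂ := fun u n =>
    ζ n u * ((u - z 0 n) * (u - z 1 n) * (u - z 2 n) * (u - z 3 n)) with hqdef
  have hqlim : ∀ u ∈ V, Tendsto (q u) atTop (𝓝 (g u * D' u)) := by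
    intro u hu
    exact (hg.tendsto_at hu).mul
      ((((tendsto_const_nhds.sub (hz 0)).mul (tendsto_const_nhds.sub (hz 1))).mul
        (tendsto_const_nhds.sub (hz 2))).mul (tendsto_const_nhds.sub (hz 3)))
  have hqev : ∀ u ∈ V, ∀ᶠ n in atTop,
      q u n = E2 n * u ^ 2 + E1 n * u + E0 n := by
    intro u hu
    filter_upwards [hzV 0, hzV 1, hzV 2, hzV 3] with n h0 h1 h2 h3
    have hne : ∀ i, z i n ∉ closure V → u ≠ z i n := fun i hi h => hi (h ▸ subset_closure hu)
    simp only [hqdef, hζ, hE2def, hE1def, hE0def]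
    exact key_alg (lam n) (z 0 n) (z 1 n) (z 2 n) (z 3 n) u
      (hne 0 h0) (hne 1 h1) (hne 2 h2) (hne 3 h3)
  -- three distinct sample points in V
  obtain ⟨w0, hw0⟩ := hVne
  obtain ⟨r, hr0, hball⟩ := Metric.isOpen_iff.mp hVopen w0 hw0
  set w1 : ℂ := w0 + ((r / 2 : ℝ) : ℂ) with hw1def
  set w2 : ℂ := w0 + ((r / 3 : ℝ) : ℂ) with hw2def
  have hw1V : w1 ∈ V := by
    apply hball
    rw [Metric.mem_ball, hw1def, dist_eq_norm]
    simp only [add_sub_cancel_left, Complex.norm_real]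
    rw [Real.norm_eq_abs, abs_of_pos (by linarith)]
    linarith
  have hw2V : w2 ∈ V := by
    apply hball
    rw [Metric.mem_ball, hw2def, dist_eq_norm]
    simp only [add_sub_cancel_left, Complex.norm_real]
    rw [Real.norm_eq_abs, abs_of_pos (by linarith)]
    linarith
  have h01 : w0 ≠ w1 := by
    rw [hw1def, Ne, left_eq_add, Complex.ofReal_eq_zero]
    intro h; linarith
  have h02 : w0 ≠ w2 := by
    rw [hw2def, Ne, left_eq_add, Complex.ofReal_eq_zero]
    intro h; linarith
  have h12 : w1 ≠ w2 := by
    rw [hw1def, hw2def, Ne, add_right_inj, Complex.ofReal_inj]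
    intro h; linarith
  -- limit coefficients
  set L : ℂ → ℂ := fun u => g u * D' u with hLdef
  set c2 : ℂ := L w0 / ((w0 - w1) * (w0 - w2)) + L w1 / ((w1 - w0) * (w1 - w2))
    + L w2 / ((w2 - w0) * (w2 - w1)) with hc2def
  set c1 : ℂ := -(L w0 * (w1 + w2) / ((w0 - w1) * (w0 - w2))
    + L w1 * (w0 + w2) / ((w1 - w0) * (w1 - w2))
    + L w2 * (w0 + w1) / ((w2 - w0) * (w2 - w1))) with hc1def
  set c0 : ℂ := L w0 * (w1 * w2) / ((w0 - w1) * (w0 - w2))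
    + L w1 * (w0 * w2) / ((w1 - w0) * (w1 - w2))
    + L w2 * (w0 * w1) / ((w2 - w0) * (w2 - w1)) with hc0def
  have hE2lim : Tendsto E2 atTop (𝓝 c2) := by
    have h : Tendsto (fun n => q w0 n / ((w0 - w1) * (w0 - w2))
        + q w1 n / ((w1 - w0) * (w1 - w2)) + q w2 n / ((w2 - w0) * (w2 - w1)))
        atTop (𝓝 c2) :=
      (((hqlim w0 hw0).div_const _).add ((hqlim w1 hw1V).div_const _)).add
        ((hqlim w2 hw2V).div_const _)
    refine h.congr' ?_
    filter_upwards [hqev w0 hw0, hqev w1 hw1V, hqev w2 hw2V] with n h0 h1 h2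
    rw [h0, h1, h2]
    exact lagrange_e2 w0 w1 w2 (E2 n) (E1 n) (E0 n) h01 h02 h12
  have hE1lim : Tendsto E1 atTop (𝓝 c1) := by
    have h : Tendsto (fun n => -(q w0 n * (w1 + w2) / ((w0 - w1) * (w0 - w2))
        + q w1 n * (w0 + w2) / ((w1 - w0) * (w1 - w2))
        + q w2 n * (w0 + w1) / ((w2 - w0) * (w2 - w1)))) atTop (𝓝 c1) :=
      (((((hqlim w0 hw0).mul_const _).div_const _).add
        (((hqlim w1 hw1V).mul_const _).div_const _)).add
        (((hqlim w2 hw2V).mul_const _).div_const _)).neg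
    refine h.congr' ?_
    filter_upwards [hqev w0 hw0, hqev w1 hw1V, hqev w2 hw2V] with n h0 h1 h2
    rw [h0, h1, h2]
    exact lagrange_e1 w0 w1 w2 (E2 n) (E1 n) (E0 n) h01 h02 h12
  have hE0lim : Tendsto E0 atTop (𝓝 c0) := by
    have h : Tendsto (fun n => q w0 n * (w1 * w2) / ((w0 - w1) * (w0 - w2))
        + q w1 n * (w0 * w2) / ((w1 - w0) * (w1 - w2))
        + q w2 n * (w0 * w1) / ((w2 - w0) * (w2 - w1))) atTop (𝓝 c0) :=
      ((((hqlim w0 hw0).mul_const _).div_const _).add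
        (((hqlim w1 hw1V).mul_const _).div_const _)).add
        (((hqlim w2 hw2V).mul_const _).div_const _)
    refine h.congr' ?_
    filter_upwards [hqev w0 hw0, hqev w1 hw1V, hqev w2 hw2V] with n h0 h1 h2
    rw [h0, h1, h2]
    exact lagrange_e0 w0 w1 w2 (E2 n) (E1 n) (E0 n) h01 h02 h12
  -- the limit polynomial
  refine ⟨Polynomial.C c2 * Polynomial.X ^ 2 + Polynomial.C c1 * Polynomial.X
    + Polynomial.C c0, ?_, ?_⟩
  · compute_degree
  intro K hKsub hKcompact
  have hz'K : ∀ i, z' i ∉ K := by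
    intro i hmem
    exact hKsub hmem (by fin_cases i <;> simp)
  -- the parametrized family
  set Φ : XSp → ℂ → ℂ := fun p w => (p.1.1 * w ^ 2 + p.1.2.1 * w + p.1.2.2)
    / ((w - p.2 0) * (w - p.2 1) * (w - p.2 2) * (w - p.2 3)) with hΦdef
  set x : XSp := ((c2, c1, c0), z') with hxdef
  set U : Set XSp := {p : XSp | ∀ i, p.2 i ∉ K} with hUdef
  have hUopen : IsOpen U := by
    have : U = ⋂ i : Fin 4, (fun p : XSp => p.2 i) ⁻¹' Kᶜ := by
      ext p; simp [hUdef]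
    rw [this]
    exact isOpen_iInter_of_finite fun i =>
      (hKcompact.isClosed.isOpen_compl).preimage ((continuous_apply i).comp continuous_snd)
  have hxU : x ∈ U := fun i => hz'K i
  have hΦcont : ContinuousOn (fun p : XSp × ℂ => Φ p.1 p.2) (U ×ˢ K) := by
    apply ContinuousOn.div
    · fun_prop
    · fun_prop
    · rintro ⟨p, w⟩ ⟨hpU, hwK⟩
      have hne : ∀ i, w - p.2 i ≠ 0 := fun i =>
        sub_ne_zero.mpr (fun h => hpU i (h ▸ hwK))
      exact mul_ne_zero (mul_ne_zero (mul_ne_zero (hne 0) (hne 1)) (hne 2)) (hne 3)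
  set pseq : ℕ → XSp := fun n => ((E2 n, E1 n, E0 n), fun i => z i n) with hpseqdef
  have hpseq : Tendsto pseq atTop (𝓝 x) := by
    rw [hxdef]
    refine Tendsto.prodMk_nhds (Tendsto.prodMk_nhds hE2lim
      (Tendsto.prodMk_nhds hE1lim hE0lim)) ?_
    rw [tendsto_pi_nhds]
    intro i
    exact hz i
  have hparam := param_unif hKcompact (hUopen.mem_nhds hxU) hΦcont hpseq
  have hzK : ∀ i, ∀ᶠ n in atTop, z i n ∉ K := fun i =>
    (hz i).eventually (hKcompact.isClosed.isOpen_compl.mem_nhds (hz'K i))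
  have hEqOn : ∀ᶠ n in atTop, Set.EqOn (fun w => Φ (pseq n) w) (ζ n) K := by
    filter_upwards [hzK 0, hzK 1, hzK 2, hzK 3] with n h0 h1 h2 h3
    intro w hw
    have hne : ∀ i, z i n ∉ K → w ≠ z i n := fun i hi h => hi (h ▸ hw)
    simp only [hΦdef, hpseqdef, hζ, hE2def, hE1def, hE0def]
    exact (key_div (lam n) (z 0 n) (z 1 n) (z 2 n) (z 3 n) w
      (hne 0 h0) (hne 1 h1) (hne 2 h2) (hne 3 h3)).symm
  have hfinal := hparam.congr hEqOn
  have hlimeq : ∀ w : ℂ,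
      Polynomial.eval w (Polynomial.C c2 * Polynomial.X ^ 2 + Polynomial.C c1 * Polynomial.X
        + Polynomial.C c0) / ((w - z' 0) * (w - z' 1) * (w - z' 2) * (w - z' 3))
      = Φ x w := by
    intro w
    simp [hΦdef, hxdef]
  rw [show (fun w => Polynomial.eval w (Polynomial.C c2 * Polynomial.X ^ 2
      + Polynomial.C c1 * Polynomial.X + Polynomial.C c0)
      / ((w - z' 0) * (w - z' 1) * (w - z' 2) * (w - z' 3))) = fun w => Φ x w
    from funext hlimeq]
  exact hfinal
end

section
/- For i = 1, 2, 3, 4 let (z_i^{(n)}) be sequences in ℂ with z_i^{(n)} → z_i′ as n → ∞, let (λ_n) be a sequence in ℂ with |λ_n| → ∞, and define ζ_n(z) = λ_n·( −1/(z − z₁^{(n)}) + 1/(z − z₂^{(n)}) − 1/(z − z₃^{(n)}) + 1/(z − z₄^{(n)}) ). If the four limits z₁′, z₂′, z₃′, z₄′ are pairwise distinct, then for every nonempty open set V ⊆ ℂ ∖ {z₁′, z₂′, z₃′, z₄′} there exists a point z ∈ V at which the sequence (ζ_n(z)) does not converge in ℂ. -/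
open Filter Topology Polynomial

/-- The 'merge' argument of Section 1.6.2. For sequences `z i n → z' i` (`i = 1,…,4`)
and coefficients `λ n` with `|λ n| → ∞`, let
`ζ n w = λ n · (−1/(w−z₁ⁿ) + 1/(w−z₂ⁿ) − 1/(w−z₃ⁿ) + 1/(w−z₄ⁿ))`.
If the limits `z'₁,…,z'₄` are pairwise distinct, then on every nonempty open subset of
`ℂ ∖ {z'₁,…,z'₄}` there is a point at which `(ζ n)` fails to converge. -/
theorem stmt_12 (z : Fin 4 → ℕ → ℂ) (z' : Fin 4 → ℂ)
    (hz : ∀ i, Tendsto (z i) atTop (𝓝 (z' i)))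
    (lam : ℕ → ℂ)
    (hlam : Tendsto (fun n => ‖lam n‖) atTop atTop)
    (ζ : ℕ → ℂ → ℂ)
    (hζ : ∀ n w, ζ n w = lam n * (-(w - z 0 n)⁻¹ + (w - z 1 n)⁻¹
      - (w - z 2 n)⁻¹ + (w - z 3 n)⁻¹))
    (hdist : ∀ i j, i ≠ j → z' i ≠ z' j)
    (V : Set ℂ) (hVopen : IsOpen V) (hVne : V.Nonempty)
    (hVsub : V ⊆ ({z' 0, z' 1, z' 2, z' 3}ᶜ : Set ℂ)) :
    ∃ w ∈ V, ¬ ∃ l : ℂ, Tendsto (fun n => ζ n w) atTop (𝓝 l) := by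
  set a := z' 0; set b := z' 1; set c := z' 2; set d := z' 3
  have hab : a ≠ b := hdist 0 1 (by decide)
  have hac : a ≠ c := hdist 0 2 (by decide)
  have had : a ≠ d := hdist 0 3 (by decide)
  -- the numerator polynomial
  set P : ℂ[X] := -((X - C b) * (X - C c) * (X - C d)) + (X - C a) * (X - C c) * (X - C d)
      - (X - C a) * (X - C b) * (X - C d) + (X - C a) * (X - C b) * (X - C c) with hP
  have hPa : P.eval a = -((a - b) * (a - c) * (a - d)) := by
    simp only [hP, eval_add, eval_sub, eval_neg, eval_mul, eval_X, eval_C]; ring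
  have hPne : P ≠ 0 := by
    intro h
    rw [h, eval_zero] at hPa
    have hne : (a - b) * (a - c) * (a - d) ≠ 0 :=
      mul_ne_zero (mul_ne_zero (sub_ne_zero.mpr hab) (sub_ne_zero.mpr hac)) (sub_ne_zero.mpr had)
    exact hne (neg_eq_zero.mp hPa.symm)
  -- V is infinite
  have hVinf : V.Infinite := by
    obtain ⟨x, hx⟩ := hVne
    exact infinite_of_mem_nhds x (hVopen.mem_nhds hx)
  obtain ⟨w, hwV, hwP⟩ := hVinf.exists_notMem_finite (Polynomial.finite_setOf_isRoot hPne)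
  have hwne : ∀ i : Fin 4, w ≠ z' i := by
    have := hVsub hwV
    simp only [Set.mem_compl_iff, Set.mem_insert_iff, Set.mem_singleton_iff] at this
    push_neg at this
    intro i; fin_cases i <;> tauto
  refine ⟨w, hwV, ?_⟩
  -- the limit of the bracket is nonzero
  set L : ℂ := -(w - a)⁻¹ + (w - b)⁻¹ - (w - c)⁻¹ + (w - d)⁻¹ with hL
  have hwa : w - a ≠ 0 := sub_ne_zero.mpr (hwne 0)
  have hwb : w - b ≠ 0 := sub_ne_zero.mpr (hwne 1)
  have hwc : w - c ≠ 0 := sub_ne_zero.mpr (hwne 2)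
  have hwd : w - d ≠ 0 := sub_ne_zero.mpr (hwne 3)
  have hLne : L ≠ 0 := by
    intro h
    apply hwP
    simp only [Set.mem_setOf_eq, IsRoot, hP]
    rw [hL] at h
    field_simp at h
    simp only [eval_add, eval_sub, eval_neg, eval_mul, eval_X, eval_C]
    linear_combination h
  -- convergence of the bracket to L
  have hbr : Tendsto (fun n => -(w - z 0 n)⁻¹ + (w - z 1 n)⁻¹
      - (w - z 2 n)⁻¹ + (w - z 3 n)⁻¹) atTop (𝓝 L) := by
    have h0 : Tendsto (fun n => (w - z 0 n)⁻¹) atTop (𝓝 (w - a)⁻¹) :=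
      ((tendsto_const_nhds.sub (hz 0)).inv₀ hwa)
    have h1 : Tendsto (fun n => (w - z 1 n)⁻¹) atTop (𝓝 (w - b)⁻¹) :=
      ((tendsto_const_nhds.sub (hz 1)).inv₀ hwb)
    have h2 : Tendsto (fun n => (w - z 2 n)⁻¹) atTop (𝓝 (w - c)⁻¹) :=
      ((tendsto_const_nhds.sub (hz 2)).inv₀ hwc)
    have h3 : Tendsto (fun n => (w - z 3 n)⁻¹) atTop (𝓝 (w - d)⁻¹) :=
      ((tendsto_const_nhds.sub (hz 3)).inv₀ hwd)
    exact ((h0.neg.add h1).sub h2).add h3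
  have habs : Tendsto (fun n => ‖ζ n w‖) atTop atTop := by
    have : Tendsto (fun n => ‖lam n‖ * ‖
        (-(w - z 0 n)⁻¹ + (w - z 1 n)⁻¹ - (w - z 2 n)⁻¹ + (w - z 3 n)⁻¹)‖) atTop atTop := by
      refine hlam.atTop_mul_pos (norm_pos_iff.mpr hLne) ?_
      exact (continuous_norm.continuousAt.tendsto.comp hbr)
    convert this using 2 with n
    rw [hζ, norm_mul]
  rintro ⟨l, hl⟩
  have : Tendsto (fun n => ‖ζ n w‖) atTop (𝓝 ‖l‖) :=
    (continuous_norm.continuousAt.tendsto.comp hl)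
  exact not_tendsto_atTop_of_tendsto_nhds this habs
end
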